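/- arXiv:1410.5505 — 6 statements merged into one kernel-verified Lean document; each statement's English description precedes it below -/
import Mathlib

section
/- Let 0 → Y →(j) X →(q) Z → 0 be an exact sequence of Banach spaces with Y and Z infinite-dimensional. Then X is hereditarily indecomposable if and only if Y is hereditarily indecomposable and q is strictly singular. -/
/-!
If `X` is H.I., so is its closed subspace `ker q ≅ Y`; and if `q` were bounded below on an
infinite-dimensional closed `M`, then `M ⊕ ker q` would be a topological direct sum in `X`.

Conversely, let `A ⊕ B` be a topological direct sum of closed infinite-dimensional subspaces of
`X`. Strict singularity of `q` together with Mazur's finite-codimension argument gives unit vectors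
`e n`, alternately in `A` and `B`, forming a basic sequence of constant `2` with `‖q (e n)‖`
arbitrarily small. By the open mapping theorem there are `u n` with `q (u n) = q (e n)` and
`∑ ‖u n‖ ≤ 1 / 8`; the perturbed vectors `e n - u n ∈ ker q` are then equivalent to `e n`, so the
closed spans of the even-indexed and of the odd-indexed ones decompose a subspace of `ker q ≅ Y`.
-/

def IndecomposableSpace (X : Type*) [NormedAddCommGroup X] [NormedSpace ℝ X] : Prop :=
  ¬ ∃ A B : Submodule ℝ X, IsClosed (A : Set X) ∧ IsClosed (B : Set X) ∧
      ¬ FiniteDimensional ℝ A ∧ ¬ FiniteDimensional ℝ B ∧ IsCompl A B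

def HI (X : Type*) [NormedAddCommGroup X] [NormedSpace ℝ X] : Prop :=
  ¬ FiniteDimensional ℝ X ∧
    ∀ M : Submodule ℝ X, IsClosed (M : Set X) → ¬ FiniteDimensional ℝ M →
      IndecomposableSpace M

def StrictlySingular {X Z : Type*} [NormedAddCommGroup X] [NormedSpace ℝ X]
    [NormedAddCommGroup Z] [NormedSpace ℝ Z] (q : X →L[ℝ] Z) : Prop :=
  ∀ M : Submodule ℝ X, IsClosed (M : Set X) → ¬ FiniteDimensional ℝ M →
    ¬ ∃ c : ℝ, 0 < c ∧ ∀ x ∈ M, c * ‖x‖ ≤ ‖q x‖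

open Submodule

section Transport

variable {E F : Type*} [NormedAddCommGroup E] [NormedSpace ℝ E]
  [NormedAddCommGroup F] [NormedSpace ℝ F]

theorem IndecomposableSpace.congr (e : E ≃L[ℝ] F) (h : IndecomposableSpace E) :
    IndecomposableSpace F := by
  rintro ⟨A, B, hAc, hBc, hAf, hBf, hAB⟩
  let f : F →ₗ[ℝ] E := (e.symm : F →L[ℝ] E)
  refine h ⟨A.map f, B.map f, ?_, ?_, ?_, ?_, (orderIsoMapComap e.symm.toLinearEquiv).isCompl hAB⟩
  · rw [map_coe]; exact e.symm.toHomeomorph.isClosedMap _ hAc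
  · rw [map_coe]; exact e.symm.toHomeomorph.isClosedMap _ hBc
  · exact hAf ∘ (Module.Finite.equiv_iff (e.symm.submoduleMap A).toLinearEquiv).mpr
  · exact hBf ∘ (Module.Finite.equiv_iff (e.symm.submoduleMap B).toLinearEquiv).mpr

theorem HI.congr (e : E ≃L[ℝ] F) (h : HI E) : HI F := by
  refine ⟨h.1 ∘ (Module.Finite.equiv_iff e.toLinearEquiv).mpr, fun M hMc hMf => ?_⟩
  let f : F →ₗ[ℝ] E := (e.symm : F →L[ℝ] E)
  refine (h.2 (M.map f) ?_ ?_).congr (e.symm.submoduleMap M).symm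
  · rw [map_coe]; exact e.symm.toHomeomorph.isClosedMap _ hMc
  · exact hMf ∘ (Module.Finite.equiv_iff (e.symm.submoduleMap M).toLinearEquiv).mpr

end Transport

section Subspace

variable {E : Type*} [NormedAddCommGroup E] [NormedSpace ℝ E]

theorem Submodule.isClosed_map_subtype {M : Submodule ℝ E} (hM : IsClosed (M : Set E))
    {N : Submodule ℝ M} (hN : IsClosed (N : Set M)) : IsClosed (N.map M.subtype : Set E) := by
  rw [map_coe]; exact hM.isClosedEmbedding_subtypeVal.isClosedMap _ hN

theorem Submodule.not_finiteDimensional_map_subtype (M : Submodule ℝ E) {N : Submodule ℝ M}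
    (hN : ¬ FiniteDimensional ℝ N) : ¬ FiniteDimensional ℝ (N.map M.subtype) :=
  hN ∘ (Module.Finite.equiv_iff (M.equivSubtypeMap N)).mpr

theorem HI.submodule (h : HI E) (M : Submodule ℝ E) (hMc : IsClosed (M : Set E))
    (hMf : ¬ FiniteDimensional ℝ M) : HI M :=
  ⟨hMf, fun N hNc hNf =>
    let e : N ≃ₗᵢ[ℝ] N.map M.subtype := { M.equivSubtypeMap N with norm_map' := fun _ => rfl }
    (h.2 _ (isClosed_map_subtype hMc hNc) (M.not_finiteDimensional_map_subtype hNf)).congr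
      e.toContinuousLinearEquiv.symm⟩

end Subspace

section Decomposition

variable {E : Type*} [NormedAddCommGroup E] [NormedSpace ℝ E] {A B : Submodule ℝ E} {C : ℝ}

theorem Submodule.disjoint_of_norm_le (h : ∀ a ∈ A, ∀ b ∈ B, ‖a‖ ≤ C * ‖a + b‖) :
    Disjoint A B := by
  refine disjoint_def.mpr fun x hxA hxB => norm_le_zero_iff.mp ?_
  simpa using h x hxA (-x) (neg_mem hxB)

theorem Submodule.norm_le_of_mem_topologicalClosure (h : ∀ a ∈ A, ∀ b ∈ B, ‖a‖ ≤ C * ‖a + b‖) :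
    ∀ a ∈ A.topologicalClosure, ∀ b ∈ B.topologicalClosure, ‖a‖ ≤ C * ‖a + b‖ := by
  have hsub : closure ((A : Set E) ×ˢ (B : Set E)) ⊆ {p : E × E | ‖p.1‖ ≤ C * ‖p.1 + p.2‖} :=
    closure_minimal (fun p hp => h _ hp.1 _ hp.2)
      (isClosed_le (by fun_prop : Continuous fun p : E × E => ‖p.1‖) (by fun_prop))
  intro a ha b hb
  exact hsub (show (a, b) ∈ _ by rw [closure_prod_eq]; exact ⟨ha, hb⟩)

theorem Submodule.isClosed_sup_of_norm_le [CompleteSpace E] (hAc : IsClosed (A : Set E))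
    (hBc : IsClosed (B : Set E)) (h : ∀ a ∈ A, ∀ b ∈ B, ‖a‖ ≤ C * ‖a + b‖) :
    IsClosed ((A ⊔ B : Submodule ℝ E) : Set E) := by
  have := hAc.completeSpace_coe
  have := hBc.completeSpace_coe
  let σ : A × B →L[ℝ] E := A.subtypeL.coprod B.subtypeL
  -- `b = (a + b) - a` bounds both components of `(a, b)` by `(1 + C) ‖a + b‖`
  have hσ : ∀ p : A × B, ‖p‖ ≤ (1 + C).toNNReal * ‖σ p‖ := by
    rintro ⟨a, b⟩
    have ha := h a a.2 b b.2
    have hb : ‖(b : E)‖ ≤ ‖(a : E) + b‖ + ‖(a : E)‖ := by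
      simpa using norm_sub_le ((a : E) + b) a
    have hab : (1 + C) * ‖(a : E) + b‖ ≤ (1 + C).toNNReal * ‖(a : E) + b‖ :=
      mul_le_mul_of_nonneg_right (Real.le_coe_toNNReal _) (norm_nonneg _)
    simp only [Prod.norm_mk, max_le_iff, σ, ContinuousLinearMap.coprod_apply,
      Submodule.subtypeL_apply, Submodule.coe_norm]
    constructor <;> nlinarith [norm_nonneg ((a : E) + b)]
  have hrange : Set.range σ = ((A ⊔ B : Submodule ℝ E) : Set E) := by
    have : Set.range σ = (LinearMap.range (A.subtype.coprod B.subtype) : Set E) := rfl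
    rw [this, LinearMap.range_coprod, range_subtype, range_subtype]
  rw [← hrange]
  exact (σ.antilipschitz_of_bound hσ).isClosed_range σ.uniformContinuous

theorem not_indecomposableSpace_sup [CompleteSpace E] (hAc : IsClosed (A : Set E))
    (hBc : IsClosed (B : Set E)) (hAf : ¬ FiniteDimensional ℝ A) (hBf : ¬ FiniteDimensional ℝ B)
    (h : ∀ a ∈ A, ∀ b ∈ B, ‖a‖ ≤ C * ‖a + b‖) : ¬ IndecomposableSpace (A ⊔ B : Submodule ℝ E) := by
  set N := A ⊔ B
  refine not_not.mpr ⟨A.comap N.subtype, B.comap N.subtype, hAc.preimage continuous_subtype_val,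
    hBc.preimage continuous_subtype_val,
    hAf ∘ (Module.Finite.equiv_iff (comapSubtypeEquivOfLe le_sup_left)).mp,
    hBf ∘ (Module.Finite.equiv_iff (comapSubtypeEquivOfLe le_sup_right)).mp, ?_, ?_⟩
  · exact disjoint_def.mpr fun x hxA hxB =>
      Subtype.ext (disjoint_def.mp (Submodule.disjoint_of_norm_le h) _ hxA hxB)
  · rw [codisjoint_iff, ← (map_injective_of_injective N.injective_subtype).eq_iff,
      Submodule.map_sup, map_comap_subtype, map_comap_subtype, map_subtype_top,
      inf_eq_right.mpr le_sup_left, inf_eq_right.mpr le_sup_right]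

theorem not_HI_of_norm_le [CompleteSpace E] (hAf : ¬ FiniteDimensional ℝ A)
    (hBf : ¬ FiniteDimensional ℝ B) (h : ∀ a ∈ A, ∀ b ∈ B, ‖a‖ ≤ C * ‖a + b‖) : ¬ HI E := by
  intro hE
  have h' := Submodule.norm_le_of_mem_topologicalClosure h
  have hAf' : ¬ FiniteDimensional ℝ A.topologicalClosure :=
    fun _ => hAf (Submodule.finiteDimensional_of_le A.le_topologicalClosure)
  have hBf' : ¬ FiniteDimensional ℝ B.topologicalClosure :=
    fun _ => hBf (Submodule.finiteDimensional_of_le B.le_topologicalClosure)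
  refine not_indecomposableSpace_sup A.isClosed_topologicalClosure B.isClosed_topologicalClosure
    hAf' hBf' h' (hE.2 _ ?_ ?_)
  · exact Submodule.isClosed_sup_of_norm_le A.isClosed_topologicalClosure
      B.isClosed_topologicalClosure h'
  · exact fun _ => hAf' (Submodule.finiteDimensional_of_le
      (le_sup_left : A.topologicalClosure ≤ A.topologicalClosure ⊔ B.topologicalClosure))

end Decomposition

section Projection

variable {E : Type*} [NormedAddCommGroup E] [NormedSpace ℝ E] [CompleteSpace E]

theorem Submodule.exists_norm_le_of_isCompl {A B : Submodule ℝ E} (hAc : IsClosed (A : Set E))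
    (hBc : IsClosed (B : Set E)) (hAB : IsCompl A B) :
    ∃ C, ∀ a ∈ A, ∀ b ∈ B, ‖a‖ ≤ C * ‖a + b‖ := by
  have hAB' := hAB.isTopCompl_of_isClosed hAc hBc
  let P := A.projectionOntoL B hAB'
  refine ⟨‖P‖, fun a ha b hb => ?_⟩
  have hP : P (a + b) = ⟨a, ha⟩ := by
    rw [map_add, projectionOntoL_apply_eq_zero_of_mem_right hAB' hb, add_zero]
    exact projectionOntoL_apply_left hAB' ⟨a, ha⟩
  calc ‖a‖ = ‖P (a + b)‖ := by rw [hP]; rfl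
    _ ≤ ‖P‖ * ‖a + b‖ := P.le_opNorm _

theorem exists_norm_le_of_not_HI (hE : ¬ FiniteDimensional ℝ E) (h : ¬ HI E) :
    ∃ A B : Submodule ℝ E, IsClosed (A : Set E) ∧ IsClosed (B : Set E) ∧
      ¬ FiniteDimensional ℝ A ∧ ¬ FiniteDimensional ℝ B ∧
      ∃ C, ∀ a ∈ A, ∀ b ∈ B, ‖a‖ ≤ C * ‖a + b‖ := by
  simp only [HI, hE, not_false_eq_true, true_and, not_forall] at h
  obtain ⟨M, hMc, hMf, hM⟩ := h
  obtain ⟨A, B, hAc, hBc, hAf, hBf, hAB⟩ := not_not.mp hM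
  have := hMc.completeSpace_coe
  obtain ⟨C, hC⟩ := exists_norm_le_of_isCompl hAc hBc hAB
  refine ⟨A.map M.subtype, B.map M.subtype, isClosed_map_subtype hMc hAc,
    isClosed_map_subtype hMc hBc, M.not_finiteDimensional_map_subtype hAf,
    M.not_finiteDimensional_map_subtype hBf, C, ?_⟩
  rintro _ ⟨a, ha, rfl⟩ _ ⟨b, hb, rfl⟩
  exact hC a ha b hb

end Projection

section Mazur

variable {E : Type*} [NormedAddCommGroup E] [NormedSpace ℝ E]

theorem Submodule.not_finiteDimensional_inf_of_finiteDimensional_quotient {V W : Submodule ℝ E}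
    (hV : ¬ FiniteDimensional ℝ V) [FiniteDimensional ℝ (E ⧸ W)] :
    ¬ FiniteDimensional ℝ (V ⊓ W : Submodule ℝ E) := by
  intro h
  let f : V →ₗ[ℝ] E ⧸ W := W.mkQ ∘ₗ V.subtype
  have hker : LinearMap.ker f.rangeRestrict = (V ⊓ W).comap V.subtype := by
    ext x; simp [f]
  have : FiniteDimensional ℝ (LinearMap.ker f.rangeRestrict) := by
    rw [hker]; exact (comapSubtypeEquivOfLe inf_le_left).symm.finiteDimensional
  exact hV (Module.Finite.of_exact (LinearMap.exact_subtype_ker_map _) f.surjective_rangeRestrict)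

theorem exists_finiteDimensional_quotient_le_norm_add (F : Submodule ℝ E) [FiniteDimensional ℝ F]
    {a : ℝ} (ha : a < 1) : ∃ W : Submodule ℝ E, IsClosed (W : Set E) ∧
      FiniteDimensional ℝ (E ⧸ W) ∧ ∀ x ∈ W, ∀ f ∈ F, a * ‖f‖ ≤ ‖f + x‖ := by
  let S : Set E := Subtype.val '' Metric.sphere (0 : F) 1
  have hS : IsCompact S := (isCompact_sphere 0 1).image continuous_subtype_val
  obtain ⟨t, htS, ht, hcover⟩ := finite_cover_balls_of_compact hS (sub_pos.mpr ha)
  choose φ hφ1 hφy using fun y : t => exists_dual_vector'' ℝ (y : E)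
  have := ht.to_subtype
  let Φ : E →L[ℝ] (t → ℝ) := ContinuousLinearMap.pi φ
  refine ⟨LinearMap.ker (Φ : E →ₗ[ℝ] t → ℝ), Φ.isClosed_ker,
    (LinearMap.quotKerEquivRange (Φ : E →ₗ[ℝ] t → ℝ)).symm.finiteDimensional, ?_⟩
  -- a norming functional at a point `y` of the net within `1 - a` of `g` vanishes on `ker Φ`
  have hunit : ∀ g ∈ S, ∀ x ∈ LinearMap.ker (Φ : E →ₗ[ℝ] t → ℝ), a ≤ ‖g + x‖ := by
    intro g hg x hx
    obtain ⟨y, hyt, hgy⟩ := Set.mem_iUnion₂.mp (hcover hg)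
    obtain ⟨y', hy', rfl⟩ := htS hyt
    have hy1 : ‖(y' : E)‖ = 1 := by simpa using hy'
    have hφx : φ ⟨_, hyt⟩ x = 0 := congr_fun hx ⟨_, hyt⟩
    have hle : ∀ v, φ ⟨_, hyt⟩ v ≤ ‖v‖ := fun v =>
      (Real.le_norm_self _).trans ((φ ⟨_, hyt⟩).le_of_opNorm_le (hφ1 _) v |>.trans_eq (one_mul _))
    have hgy' : ‖(y' : E) - g‖ < 1 - a := by rw [norm_sub_rev, ← dist_eq_norm]; exact hgy
    have h1 : φ ⟨_, hyt⟩ y' = 1 := by simpa [hy1] using hφy ⟨_, hyt⟩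
    have h2 := hle ((y' : E) - g)
    have h3 := hle (g + x)
    rw [map_sub] at h2
    rw [map_add, hφx, add_zero] at h3
    linarith
  intro x hx f hf
  rcases eq_or_ne f 0 with rfl | hf0
  · simp
  have hf' : 0 < ‖f‖ := norm_pos_iff.mpr hf0
  have hg : ‖f‖⁻¹ • f ∈ S := ⟨⟨_, F.smul_mem _ hf⟩, by simp [norm_smul, hf0], rfl⟩
  have key := hunit _ hg _ (smul_mem _ ‖f‖⁻¹ hx)
  calc a * ‖f‖ ≤ ‖‖f‖⁻¹ • f + ‖f‖⁻¹ • x‖ * ‖f‖ := mul_le_mul_of_nonneg_right key hf'.le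
    _ = ‖f + x‖ := by
      rw [← smul_add, norm_smul, norm_inv, norm_norm]; field_simp

end Mazur

theorem exists_seq_forall_image_Iio {α : Type*} {P : ℕ → Set α → α → Prop}
    (h : ∀ n (s : Set α), s.Finite → ∃ x, P n s x) :
    ∃ e : ℕ → α, ∀ n, P n (e '' Set.Iio n) (e n) := by
  choose pick hpick using h
  let e : ℕ → α := Nat.strongRec fun n rec =>
    pick n (Set.range fun m : Set.Iio n => rec m m.2) (Set.finite_range _)
  refine ⟨e, fun n => ?_⟩
  have he : e n = pick n (Set.range fun m : Set.Iio n => e m) (Set.finite_range _) :=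
    Nat.strongRec_eq _ n
  rw [Set.image_eq_range, he]
  exact hpick _ _ _

section StrictlySingular

variable {X Z : Type*} [NormedAddCommGroup X] [NormedSpace ℝ X]
  [NormedAddCommGroup Z] [NormedSpace ℝ Z] {q : X →L[ℝ] Z}

theorem StrictlySingular.exists_norm_eq_one_norm_lt (hq : StrictlySingular q) {V : Submodule ℝ X}
    (hVc : IsClosed (V : Set X)) (hVf : ¬ FiniteDimensional ℝ V) {δ : ℝ} (hδ : 0 < δ) :
    ∃ x ∈ V, ‖x‖ = 1 ∧ ‖q x‖ < δ := by
  by_contra! h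
  refine hq V hVc hVf ⟨δ, hδ, fun x hx => ?_⟩
  rcases eq_or_ne x 0 with rfl | hx0
  · simp
  have hx' : 0 < ‖x‖ := norm_pos_iff.mpr hx0
  have := h _ (V.smul_mem ‖x‖⁻¹ hx) (norm_smul_inv_norm hx0)
  rw [map_smul, norm_smul, norm_inv, norm_norm, inv_mul_eq_div, le_div_iff₀ hx'] at this
  exact this

theorem StrictlySingular.exists_norm_eq_one_norm_lt_and_le_norm_add (hq : StrictlySingular q)
    {V : Submodule ℝ X} (hVc : IsClosed (V : Set X)) (hVf : ¬ FiniteDimensional ℝ V)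
    (F : Submodule ℝ X) [FiniteDimensional ℝ F] {a δ : ℝ} (ha : a < 1) (hδ : 0 < δ) :
    ∃ x ∈ V, ‖x‖ = 1 ∧ ‖q x‖ < δ ∧ ∀ f ∈ F, ∀ l : ℝ, a * ‖f‖ ≤ ‖f + l • x‖ := by
  obtain ⟨W, hWc, hWq, hW⟩ := exists_finiteDimensional_quotient_le_norm_add F ha
  obtain ⟨x, hx, hx1, hqx⟩ := hq.exists_norm_eq_one_norm_lt (hVc.inter hWc)
    (Submodule.not_finiteDimensional_inf_of_finiteDimensional_quotient hVf) hδ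
  exact ⟨x, hx.1, hx1, hqx, fun f hf l => hW _ (W.smul_mem l hx.2) f hf⟩

end StrictlySingular

section BasicSequence

variable {E : Type*} [NormedAddCommGroup E] [NormedSpace ℝ E] {e : ℕ → E} {w : ℕ → ℝ}

theorem monotone_mul_norm_sum_range
    (he : ∀ n, ∀ f ∈ span ℝ (e '' Set.Iio n), ∀ l : ℝ, w n * ‖f‖ ≤ w (n + 1) * ‖f + l • e n‖)
    (c : ℕ → ℝ) : Monotone fun n => w n * ‖∑ i ∈ Finset.range n, c i • e i‖ := by
  refine monotone_nat_of_le_succ fun n => ?_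
  rw [Finset.sum_range_succ]
  exact he n _ (sum_mem fun i hi => smul_mem _ _ (subset_span ⟨i, Finset.mem_range.mp hi, rfl⟩)) _

theorem abs_apply_le_norm_linearCombination {K : ℝ} (he1 : ∀ n, ‖e n‖ = 1)
    (hw : ∀ n, 1 ≤ w n ∧ w n ≤ K)
    (he : ∀ n, ∀ f ∈ span ℝ (e '' Set.Iio n), ∀ l : ℝ, w n * ‖f‖ ≤ w (n + 1) * ‖f + l • e n‖)
    (c : ℕ →₀ ℝ) (i : ℕ) : |c i| ≤ 2 * K * ‖Finsupp.linearCombination ℝ e c‖ := by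
  obtain ⟨N, hN⟩ := Finset.exists_nat_subset_range (insert i c.support)
  set S : ℕ → E := fun n => ∑ i ∈ Finset.range n, c i • e i
  have hSN : S N = Finsupp.linearCombination ℝ e c := by
    rw [Finsupp.linearCombination_apply, Finsupp.sum_of_support_subset c
      ((Finset.subset_insert _ _).trans hN) (fun i a => a • e i) (fun _ _ => zero_smul _ _)]
  have hS : ∀ m ≤ N, ‖S m‖ ≤ K * ‖Finsupp.linearCombination ℝ e c‖ := fun m hm =>
    calc ‖S m‖ ≤ w m * ‖S m‖ := le_mul_of_one_le_left (norm_nonneg _) (hw m).1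
      _ ≤ w N * ‖S N‖ := monotone_mul_norm_sum_range he c hm
      _ ≤ K * ‖Finsupp.linearCombination ℝ e c‖ := by
        rw [hSN]; exact mul_le_mul_of_nonneg_right (hw N).2 (norm_nonneg _)
  have hi : i < N := Finset.mem_range.mp (hN (Finset.mem_insert_self _ _))
  calc |c i| = ‖S (i + 1) - S i‖ := by
        simp only [S, Finset.sum_range_succ, add_sub_cancel_left, norm_smul, he1, mul_one,
          Real.norm_eq_abs]
    _ ≤ ‖S (i + 1)‖ + ‖S i‖ := norm_sub_le _ _
    _ ≤ 2 * K * ‖Finsupp.linearCombination ℝ e c‖ := by linarith [hS _ hi, hS _ hi.le]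

end BasicSequence

section Perturbation

open Finsupp

variable {E : Type*} [NormedAddCommGroup E] [NormedSpace ℝ E] {ι : Type*} {e g : ι → E} {K δ : ℝ}

theorem norm_linearCombination_sub_le (hK0 : 0 ≤ K)
    (hK : ∀ (c : ι →₀ ℝ) i, |c i| ≤ K * ‖linearCombination ℝ e c‖)
    (hδ : ∀ s : Finset ι, ∑ i ∈ s, ‖e i - g i‖ ≤ δ) (c : ι →₀ ℝ) :
    ‖linearCombination ℝ e c - linearCombination ℝ g c‖ ≤ K * δ * ‖linearCombination ℝ e c‖ := by
  have hsub : linearCombination ℝ e c - linearCombination ℝ g c =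
      ∑ i ∈ c.support, c i • (e i - g i) := by
    simp [linearCombination_apply, Finsupp.sum, smul_sub]
  calc ‖linearCombination ℝ e c - linearCombination ℝ g c‖
      ≤ ∑ i ∈ c.support, ‖c i • (e i - g i)‖ := hsub ▸ norm_sum_le _ _
    _ ≤ ∑ i ∈ c.support, K * ‖linearCombination ℝ e c‖ * ‖e i - g i‖ :=
        Finset.sum_le_sum fun i _ => by
          rw [norm_smul, Real.norm_eq_abs]
          exact mul_le_mul_of_nonneg_right (hK c i) (norm_nonneg _)
    _ = K * ‖linearCombination ℝ e c‖ * ∑ i ∈ c.support, ‖e i - g i‖ := (Finset.mul_sum ..).symm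
    _ ≤ K * ‖linearCombination ℝ e c‖ * δ := by gcongr; exact hδ _
    _ = K * δ * ‖linearCombination ℝ e c‖ := by ring

theorem norm_linearCombination_le_two_mul (hK0 : 0 ≤ K)
    (hK : ∀ (c : ι →₀ ℝ) i, |c i| ≤ K * ‖linearCombination ℝ e c‖)
    (hδ : ∀ s : Finset ι, ∑ i ∈ s, ‖e i - g i‖ ≤ δ) (hKδ : K * δ ≤ 1 / 2) (c : ι →₀ ℝ) :
    ‖linearCombination ℝ e c‖ ≤ 2 * ‖linearCombination ℝ g c‖ ∧
      ‖linearCombination ℝ g c‖ ≤ 2 * ‖linearCombination ℝ e c‖ := by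
  have h := (norm_linearCombination_sub_le hK0 hK hδ c).trans
    (mul_le_mul_of_nonneg_right hKδ (norm_nonneg _))
  have h1 := norm_sub_norm_le (linearCombination ℝ e c) (linearCombination ℝ g c)
  have h2 := norm_sub_norm_le (linearCombination ℝ g c) (linearCombination ℝ e c)
  rw [norm_sub_rev] at h2
  constructor <;> linarith [norm_nonneg (linearCombination ℝ e c)]

theorem linearIndependent_of_norm_sub_le (hK0 : 0 ≤ K)
    (hK : ∀ (c : ι →₀ ℝ) i, |c i| ≤ K * ‖linearCombination ℝ e c‖)
    (hδ : ∀ s : Finset ι, ∑ i ∈ s, ‖e i - g i‖ ≤ δ) (hKδ : K * δ ≤ 1 / 2) :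
    LinearIndependent ℝ g := by
  refine linearIndependent_iff.mpr fun c hc => Finsupp.ext fun i => abs_eq_zero.mp ?_
  have := (norm_linearCombination_le_two_mul hK0 hK hδ hKδ c).1
  rw [hc, norm_zero, mul_zero] at this
  have := hK c i
  refine le_antisymm ?_ (abs_nonneg _)
  nlinarith [norm_nonneg (linearCombination ℝ e c)]

theorem norm_linearCombination_le_of_supported (hK0 : 0 ≤ K)
    (hK : ∀ (c : ι →₀ ℝ) i, |c i| ≤ K * ‖linearCombination ℝ e c‖)
    (hδ : ∀ s : Finset ι, ∑ i ∈ s, ‖e i - g i‖ ≤ δ) (hKδ : K * δ ≤ 1 / 2)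
    {A B : Submodule ℝ E} {S : Set ι} (hA : ∀ i ∈ S, e i ∈ A) (hB : ∀ i ∉ S, e i ∈ B)
    {C : ℝ} (hC : 0 ≤ C) (hAB : ∀ a ∈ A, ∀ b ∈ B, ‖a‖ ≤ C * ‖a + b‖)
    {cA cB : ι →₀ ℝ} (hcA : cA ∈ supported ℝ ℝ S) (hcB : cB ∈ supported ℝ ℝ Sᶜ) :
    ‖linearCombination ℝ g cA‖ ≤ 4 * C * ‖linearCombination ℝ g cA + linearCombination ℝ g cB‖ := by
  have h := norm_linearCombination_le_two_mul hK0 hK hδ hKδ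
  have hmemA : linearCombination ℝ e cA ∈ A := span_le.mpr (by rintro _ ⟨i, hi, rfl⟩; exact hA i hi)
    ((mem_span_image_iff_linearCombination ℝ).mpr ⟨cA, hcA, rfl⟩)
  have hmemB : linearCombination ℝ e cB ∈ B := span_le.mpr (by rintro _ ⟨i, hi, rfl⟩; exact hB i hi)
    ((mem_span_image_iff_linearCombination ℝ).mpr ⟨cB, hcB, rfl⟩)
  calc ‖linearCombination ℝ g cA‖ ≤ 2 * ‖linearCombination ℝ e cA‖ := (h cA).2
    _ ≤ 2 * (C * ‖linearCombination ℝ e (cA + cB)‖) := by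
        rw [map_add]; gcongr; exact hAB _ hmemA _ hmemB
    _ ≤ 2 * (C * (2 * ‖linearCombination ℝ g (cA + cB)‖)) := by gcongr; exact (h _).1
    _ = 4 * C * ‖linearCombination ℝ g cA + linearCombination ℝ g cB‖ := by rw [map_add]; ring

theorem LinearIndependent.not_finiteDimensional_span_image (hg : LinearIndependent ℝ g)
    {S : Set ι} (hS : S.Infinite) : ¬ FiniteDimensional ℝ (span ℝ (g '' S)) := by
  intro hfin
  have : FiniteDimensional ℝ (span ℝ (Set.range (g ∘ ((↑) : S → ι)))) := by
    rwa [Set.range_comp, Subtype.range_coe]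
  exact hS (Set.finite_coe_iff.mp
    (linearIndependent_span (hg.comp ((↑) : S → ι) Subtype.val_injective)).finite)

theorem not_HI_of_linearIndependent [CompleteSpace E] (hg : LinearIndependent ℝ g) {S : Set ι}
    (hS : S.Infinite) (hSc : Sᶜ.Infinite) {C : ℝ}
    (h : ∀ cA ∈ supported ℝ ℝ S, ∀ cB ∈ supported ℝ ℝ Sᶜ,
      ‖linearCombination ℝ g cA‖ ≤ C * ‖linearCombination ℝ g cA + linearCombination ℝ g cB‖) :
    ¬ HI E := by
  refine not_HI_of_norm_le (hg.not_finiteDimensional_span_image hS)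
    (hg.not_finiteDimensional_span_image hSc) (C := C) ?_
  intro a ha b hb
  obtain ⟨cA, hcA, rfl⟩ := (mem_span_image_iff_linearCombination ℝ).mp ha
  obtain ⟨cB, hcB, rfl⟩ := (mem_span_image_iff_linearCombination ℝ).mp hb
  exact h cA hcA cB hcB

end Perturbation

section Core

open Finsupp

variable {X Z : Type*} [NormedAddCommGroup X] [NormedSpace ℝ X]
  [NormedAddCommGroup Z] [NormedSpace ℝ Z] {q : X →L[ℝ] Z}

theorem StrictlySingular.exists_basic_seq (hSS : StrictlySingular q) {V : ℕ → Submodule ℝ X}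
    (hVc : ∀ n, IsClosed (V n : Set X)) (hVf : ∀ n, ¬ FiniteDimensional ℝ (V n)) {ε : ℕ → ℝ}
    (hε : ∀ n, 0 < ε n) : ∃ e : ℕ → X, (∀ n, e n ∈ V n) ∧ (∀ n, ‖q (e n)‖ < ε n) ∧
      ∀ (c : ℕ →₀ ℝ) i, |c i| ≤ 4 * ‖linearCombination ℝ e c‖ := by
  -- increasing weights in `[1, 2]`, so that the basis constant of `e` is at most `2`
  let w : ℕ → ℝ := fun n => 2 - (1 / 2) ^ n
  have hw : ∀ n, 1 ≤ w n ∧ w n ≤ 2 := fun n =>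
    ⟨by linarith [pow_le_one₀ (n := n) (by norm_num : (0 : ℝ) ≤ 1 / 2) (by norm_num)],
      by linarith [pow_nonneg (by norm_num : (0 : ℝ) ≤ 1 / 2) n]⟩
  have hwlt : ∀ n, w n < w (n + 1) := fun n => by
    simp only [w, pow_succ]; linarith [pow_pos (by norm_num : (0 : ℝ) < 1 / 2) n]
  have hsel : ∀ n (s : Set X), s.Finite → ∃ x, x ∈ V n ∧ ‖x‖ = 1 ∧ ‖q x‖ < ε n ∧
      ∀ f ∈ span ℝ s, ∀ l : ℝ, w n * ‖f‖ ≤ w (n + 1) * ‖f + l • x‖ := by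
    intro n s hs
    have := FiniteDimensional.span_of_finite ℝ hs
    have hw0 : 0 < w (n + 1) := (hw _).1.trans_lt' one_pos
    obtain ⟨x, hxV, hx1, hqx, hx⟩ := hSS.exists_norm_eq_one_norm_lt_and_le_norm_add (hVc n)
      (hVf n) (span ℝ s) ((div_lt_one hw0).mpr (hwlt n)) (hε n)
    refine ⟨x, hxV, hx1, hqx, fun f hf l => ?_⟩
    calc w n * ‖f‖ = w (n + 1) * (w n / w (n + 1) * ‖f‖) := by field_simp
      _ ≤ w (n + 1) * ‖f + l • x‖ := by gcongr; exact hx f hf l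
  obtain ⟨e, he⟩ := exists_seq_forall_image_Iio hsel
  choose heV he1 hqe hmaz using he
  refine ⟨e, heV, hqe, ?_⟩
  simpa [show (2 : ℝ) * 2 = 4 by norm_num] using abs_apply_le_norm_linearCombination he1 hw hmaz

theorem StrictlySingular.not_HI_ker [CompleteSpace X] [CompleteSpace Z] (hSS : StrictlySingular q)
    (hq : Function.Surjective q) {A B : Submodule ℝ X} (hAc : IsClosed (A : Set X))
    (hBc : IsClosed (B : Set X)) (hAf : ¬ FiniteDimensional ℝ A) (hBf : ¬ FiniteDimensional ℝ B)
    {C : ℝ} (hAB : ∀ a ∈ A, ∀ b ∈ B, ‖a‖ ≤ C * ‖a + b‖) :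
    ¬ HI (LinearMap.ker (q : X →ₗ[ℝ] Z)) := by
  obtain ⟨C₀, hC₀, hlift⟩ := q.exists_preimage_norm_le hq
  let V : ℕ → Submodule ℝ X := fun n => if Even n then A else B
  have hV : ∀ n, IsClosed (V n : Set X) ∧ ¬ FiniteDimensional ℝ (V n) := fun n => by
    by_cases hn : Even n
    · rw [show V n = A from if_pos hn]; exact ⟨hAc, hAf⟩
    · rw [show V n = B from if_neg hn]; exact ⟨hBc, hBf⟩
  obtain ⟨e, heV, hqe, hK⟩ := hSS.exists_basic_seq (fun n => (hV n).1) (fun n => (hV n).2)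
    (ε := fun n => (1 / 2) ^ n / 16 / C₀) fun n => by positivity
  choose u hu hu' using fun n => hlift (q (e n))
  let g : ℕ → LinearMap.ker (q : X →ₗ[ℝ] Z) := fun n => ⟨e n - u n, by simp [hu]⟩
  have hδ : ∀ s : Finset ℕ, ∑ i ∈ s, ‖e i - (g i : X)‖ ≤ 1 / 8 := fun s =>
    calc ∑ i ∈ s, ‖e i - (g i : X)‖ ≤ ∑ i ∈ s, (1 / 2 : ℝ) ^ i / 16 :=
          Finset.sum_le_sum fun i _ => calc ‖e i - (g i : X)‖ = ‖u i‖ := by simp [g]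
            _ ≤ C₀ * ‖q (e i)‖ := hu' i
            _ ≤ C₀ * ((1 / 2) ^ i / 16 / C₀) := by gcongr; exact (hqe i).le
            _ = (1 / 2) ^ i / 16 := mul_div_cancel₀ _ hC₀.ne'
      _ ≤ ∑' i, (1 / 2 : ℝ) ^ i / 16 :=
          (summable_geometric_two.div_const 16).sum_le_tsum s fun _ _ => by positivity
      _ = 1 / 8 := by rw [tsum_div_const, tsum_geometric_two]; norm_num
  have hKδ : (4 : ℝ) * (1 / 8) ≤ 1 / 2 := by norm_num
  have hcoe : ∀ c, ((linearCombination ℝ g c : LinearMap.ker (q : X →ₗ[ℝ] Z)) : X) =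
      linearCombination ℝ (fun n => (g n : X)) c :=
    fun c => apply_linearCombination ℝ (LinearMap.ker (q : X →ₗ[ℝ] Z)).subtype g c
  have hAB' : ∀ a ∈ A, ∀ b ∈ B, ‖a‖ ≤ max C 0 * ‖a + b‖ := fun a ha b hb =>
    (hAB a ha b hb).trans (by gcongr; exact le_max_left _ _)
  refine not_HI_of_linearIndependent (S := {n | Even n}) (C := 4 * max C 0)
    (LinearIndependent.of_comp (v := g) (LinearMap.ker (q : X →ₗ[ℝ] Z)).subtype
      (linearIndependent_of_norm_sub_le (by norm_num) hK hδ hKδ))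
    (Set.infinite_of_forall_exists_gt fun n => ⟨2 * n + 2, ⟨n + 1, by ring⟩, by omega⟩)
    (Set.infinite_of_forall_exists_gt fun n =>
      ⟨2 * n + 1, Nat.not_even_two_mul_add_one n, by omega⟩)
    fun cA hcA cB hcB => ?_
  have := norm_linearCombination_le_of_supported (by norm_num) hK hδ hKδ
    (fun i (hi : Even i) => by simpa [V, hi] using heV i)
    (fun i (hi : ¬ Even i) => by simpa [V, hi] using heV i)
    (le_max_right _ _) hAB' hcA hcB
  simpa only [Submodule.coe_norm, Submodule.coe_add, hcoe] using this

end Core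

theorem StrictlySingular.of_HI {X Z : Type*} [NormedAddCommGroup X] [NormedSpace ℝ X]
    [CompleteSpace X] [NormedAddCommGroup Z] [NormedSpace ℝ Z] {q : X →L[ℝ] Z} (hX : HI X)
    (hK : ¬ FiniteDimensional ℝ (LinearMap.ker (q : X →ₗ[ℝ] Z))) : StrictlySingular q := by
  rintro M - hMf ⟨c, hc, hM⟩
  refine not_HI_of_norm_le hMf hK (C := c⁻¹ * ‖q‖) (fun a ha b hb => ?_) hX
  have hqb : q b = 0 := hb
  rw [mul_assoc, ← div_eq_inv_mul, le_div_iff₀' hc]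
  calc c * ‖a‖ ≤ ‖q a‖ := hM a ha
    _ = ‖q (a + b)‖ := by rw [map_add, hqb, add_zero]
    _ ≤ ‖q‖ * ‖a + b‖ := q.le_opNorm _

theorem nonempty_continuousLinearEquiv_ker_of_range_eq {Y X Z : Type*}
    [NormedAddCommGroup Y] [NormedSpace ℝ Y] [CompleteSpace Y]
    [NormedAddCommGroup X] [NormedSpace ℝ X] [CompleteSpace X]
    [NormedAddCommGroup Z] [NormedSpace ℝ Z] {j : Y →L[ℝ] X} {q : X →L[ℝ] Z}
    (hj : Function.Injective j)
    (hexact : LinearMap.range (j : Y →ₗ[ℝ] X) = LinearMap.ker (q : X →ₗ[ℝ] Z)) :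
    Nonempty (Y ≃L[ℝ] LinearMap.ker (q : X →ₗ[ℝ] Z)) := by
  have := q.isClosed_ker.completeSpace_coe
  let jK := j.codRestrict _ fun y => hexact ▸ LinearMap.mem_range_self (j : Y →ₗ[ℝ] X) y
  refine ⟨.ofBijective jK (LinearMap.ker_eq_bot.mpr fun a b h => hj (congrArg Subtype.val h))
    (LinearMap.range_eq_top.mpr ?_)⟩
  rintro ⟨x, hx⟩
  obtain ⟨y, rfl⟩ : x ∈ LinearMap.range (j : Y →ₗ[ℝ] X) := hexact ▸ hx
  exact ⟨y, rfl⟩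

theorem stmt0_general {Y X Z : Type*}
    [NormedAddCommGroup Y] [NormedSpace ℝ Y] [CompleteSpace Y]
    [NormedAddCommGroup X] [NormedSpace ℝ X] [CompleteSpace X]
    [NormedAddCommGroup Z] [NormedSpace ℝ Z] [CompleteSpace Z]
    (hY : ¬ FiniteDimensional ℝ Y)
    (j : Y →L[ℝ] X) (q : X →L[ℝ] Z)
    (hj : Function.Injective j) (hq : Function.Surjective q)
    (hexact : LinearMap.range (j : Y →ₗ[ℝ] X) = LinearMap.ker (q : X →ₗ[ℝ] Z)) :
    HI X ↔ HI Y ∧ StrictlySingular q := by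
  obtain ⟨eY⟩ := nonempty_continuousLinearEquiv_ker_of_range_eq hj hexact
  have hK : ¬ FiniteDimensional ℝ (LinearMap.ker (q : X →ₗ[ℝ] Z)) :=
    hY ∘ (Module.Finite.equiv_iff eY.toLinearEquiv).mpr
  constructor
  · intro hX
    exact ⟨(hX.submodule _ q.isClosed_ker hK).congr eY.symm, .of_HI hX hK⟩
  · rintro ⟨hYHI, hSS⟩
    by_contra hX
    have hXf : ¬ FiniteDimensional ℝ X := fun _ => hK inferInstance
    obtain ⟨A, B, hAc, hBc, hAf, hBf, C, hAB⟩ := exists_norm_le_of_not_HI hXf hX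
    exact hSS.not_HI_ker hq hAc hBc hAf hBf hAB (hYHI.congr eY)

/-- for an exact sequence 0 → Y → X → Z → 0 of Banach spaces with `Y`, `Z`
infinite-dimensional, the middle space `X` is hereditarily indecomposable iff `Y` is
hereditarily indecomposable and the quotient map `q` is strictly singular. -/
theorem stmt0 {Y X Z : Type*}
    [NormedAddCommGroup Y] [NormedSpace ℝ Y] [CompleteSpace Y]
    [NormedAddCommGroup X] [NormedSpace ℝ X] [CompleteSpace X]
    [NormedAddCommGroup Z] [NormedSpace ℝ Z] [CompleteSpace Z]
    (hY : ¬ FiniteDimensional ℝ Y) (hZ : ¬ FiniteDimensional ℝ Z)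
    (j : Y →L[ℝ] X) (q : X →L[ℝ] Z)
    (hj : Function.Injective j) (hq : Function.Surjective q)
    (hexact : LinearMap.range (j : Y →ₗ[ℝ] X) = LinearMap.ker (q : X →ₗ[ℝ] Z)) :
    HI X ↔ HI Y ∧ StrictlySingular q :=
  stmt0_general hY j q hj hq hexact
end

section
/- For 1 < p < ∞, the Kalton–Peck map 𝒦 on real L_p(0,1), defined by 𝒦(f) = f · log(|f|/‖f‖_p) pointwise for f ≠ 0 (with value 0 at points where f vanishes, and 𝒦(0) = 0), is disjointly singular: for every sequence (f_n) of nonzero, pairwise disjointly supported functions in L_p(0,1), 𝒦 is not trivial on the closed linear span of (f_n). -/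
open MeasureTheory
open scoped ENNReal

/-- Lebesgue measure on `(0,1)`. -/
noncomputable def μ01 : Measure ℝ := volume.restrict (Set.Ioo 0 1)

/-- The Kalton–Peck map on `L_p(0,1)`: `𝒦(f) = f · log(|f|/‖f‖)` pointwise (the value is
`0` at points where `f` vanishes, and `𝒦(0) = 0`, automatically since `Real.log 0 = 0`),
as an element of `L⁰(0,1)` (a.e.-equivalence classes of measurable functions). -/
noncomputable def KPLp (p : ℝ≥0∞) [Fact (1 ≤ p)] (f : Lp ℝ p μ01) : ℝ →ₘ[μ01] ℝ :=
  AEEqFun.mk (fun t => f t * Real.log (|f t| / ‖f‖))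
    (by
      have hf : AEMeasurable (⇑f) μ01 := (Lp.aestronglyMeasurable f).aemeasurable
      have habs : AEMeasurable (fun t => |f t|) μ01 :=
        continuous_abs.measurable.comp_aemeasurable hf
      exact (hf.mul (Real.measurable_log.comp_aemeasurable
        (habs.div_const ‖f‖))).aestronglyMeasurable)

/-!
Normalize the sequence to unit vectors `g n` and suppose `‖𝒦 y - L y‖ ≤ C ‖y‖` on their closed
span. For signs `ε` on `{0, …, N-1}` the vector `y = ∑ ε n g n` has norm `N^{1/p}`, and the
Kalton–Peck formula on disjoint sums gives `𝒦 y - L y = ∑ ε n (U n - c g n)` with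
`U n = 𝒦 g n - L g n` and `c = log N / p`. Averaging over all `2^N` sign vectors isolates the
diagonal: on the support of `g m`, `|U m - c g m|` is at most the average of `|𝒦 y - L y|`, whose
`L_p` norm is at most `C N^{1/p}`. Since also `‖∑ 1_{g n ≠ 0} |U n|‖ ≤ C N^{1/p}`, we get
`c N^{1/p} = ‖c ∑ g n‖ ≤ 2 C N^{1/p}`, i.e. `log N / p ≤ 2 C` for every `N`, which is absurd.
-/

open Finset Function

section PairwiseZero

variable {ι M : Type*} [AddCommMonoid M] {s : Finset ι} {F : ι → M}

lemma Finset.forall_eq_zero_or_exists_unique_ne_zero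
    (hF : (s : Set ι).Pairwise fun m n => F m = 0 ∨ F n = 0) :
    (∀ n ∈ s, F n = 0) ∨ ∃ m ∈ s, F m ≠ 0 ∧ ∀ n ∈ s, n ≠ m → F n = 0 := by
  by_cases h : ∃ m ∈ s, F m ≠ 0
  · obtain ⟨m, hm, hm0⟩ := h
    exact Or.inr ⟨m, hm, hm0, fun n hn hnm => (hF hn hm hnm).resolve_right hm0⟩
  · exact Or.inl fun n hn => not_not.mp fun hn0 => h ⟨n, hn, hn0⟩

lemma Finset.apply_sum_of_pairwise_eq_zero_or_eq_zero {N : Type*} [AddCommMonoid N]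
    (hF : (s : Set ι).Pairwise fun m n => F m = 0 ∨ F n = 0) {ψ : M → N} (hψ : ψ 0 = 0) :
    ψ (∑ n ∈ s, F n) = ∑ n ∈ s, ψ (F n) := by
  rcases forall_eq_zero_or_exists_unique_ne_zero hF with hzero | ⟨m, hm, -, hrest⟩
  · rw [sum_eq_zero hzero, hψ, sum_eq_zero fun n hn => by rw [hzero n hn, hψ]]
  · rw [sum_eq_single_of_mem m hm hrest,
      sum_eq_single_of_mem m hm fun n hn hnm => by rw [hrest n hn hnm, hψ]]

end PairwiseZero

section Rademacher

variable {ι : Type*} [DecidableEq ι]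

/-- The sign vector with `+1` on `t` and `-1` off `t`; averaging over `t ∈ s.powerset` is the
expectation over independent random signs on `s`. -/
def rademacher (t : Finset ι) (n : ι) : ℝ := if n ∈ t then 1 else -1

lemma abs_rademacher (t : Finset ι) (n : ι) : |rademacher t n| = 1 := by
  unfold rademacher; split <;> simp

lemma sum_powerset_rademacher_mul_rademacher {s : Finset ι} {m n : ι} (hm : m ∈ s) (hn : n ∈ s) :
    ∑ t ∈ s.powerset, rademacher t m * rademacher t n = if m = n then 2 ^ #s else 0 := by
  split_ifs with hmn
  · subst hmn
    have hsq : ∀ t : Finset ι, rademacher t m * rademacher t m = 1 := fun t => by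
      unfold rademacher; split <;> simp
    simp [hsq]
  · obtain ⟨s', hns', rfl⟩ : ∃ s', n ∉ s' ∧ s = insert n s' :=
      ⟨s.erase n, notMem_erase n s, (insert_erase hn).symm⟩
    rw [sum_powerset_insert hns', ← sum_add_distrib]
    refine sum_eq_zero fun t ht => ?_
    have hnt : n ∉ t := fun h => hns' (mem_powerset.mp ht h)
    simp [rademacher, hnt, hmn]

lemma sum_powerset_rademacher_mul_sum (s : Finset ι) {m : ι} (hm : m ∈ s) (v : ι → ℝ) :
    ∑ t ∈ s.powerset, rademacher t m * ∑ n ∈ s, rademacher t n * v n = 2 ^ #s * v m := by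
  calc ∑ t ∈ s.powerset, rademacher t m * ∑ n ∈ s, rademacher t n * v n
      = ∑ n ∈ s, (∑ t ∈ s.powerset, rademacher t m * rademacher t n) * v n := by
        simp_rw [mul_sum, sum_mul, mul_assoc]
        exact sum_comm
    _ = 2 ^ #s * v m := by
        rw [sum_congr rfl fun n hn => by rw [sum_powerset_rademacher_mul_rademacher hm hn],
          sum_eq_single_of_mem m hm fun n _ hnm => by rw [if_neg (Ne.symm hnm), zero_mul],
          if_pos rfl]

lemma abs_le_average_abs_sum_rademacher_mul (s : Finset ι) {m : ι} (hm : m ∈ s) (v : ι → ℝ) :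
    |v m| ≤ (2 ^ #s)⁻¹ * ∑ t ∈ s.powerset, |∑ n ∈ s, rademacher t n * v n| := by
  rw [le_inv_mul_iff₀ (by positivity), ← abs_of_pos (by positivity : (0:ℝ) < 2 ^ #s), ← abs_mul,
    ← sum_powerset_rademacher_mul_sum s hm v]
  refine (abs_sum_le_sum_abs _ _).trans (le_of_eq (sum_congr rfl fun t _ => ?_))
  rw [abs_mul, abs_rademacher, one_mul]

end Rademacher

namespace MeasureTheory

section CoeFn

variable {α ι E : Type*} [MeasurableSpace α] {μ : Measure α}

lemma AEEqFun.coeFn_finset_sum [TopologicalSpace E] [AddCommMonoid E] [ContinuousAdd E]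
    (s : Finset ι) (F : ι → α →ₘ[μ] E) : ⇑(∑ n ∈ s, F n) =ᵐ[μ] ∑ n ∈ s, ⇑(F n) := by
  classical
  induction s using Finset.induction with
  | empty => simpa using AEEqFun.coeFn_zero
  | insert n s hn ih =>
    rw [sum_insert hn, sum_insert hn]
    exact (AEEqFun.coeFn_add _ _).trans ih.add_left

lemma Lp.coeFn_finset_sum [NormedAddCommGroup E] {p : ℝ≥0∞} (s : Finset ι) (F : ι → Lp E p μ) :
    ⇑(∑ n ∈ s, F n) =ᵐ[μ] ∑ n ∈ s, ⇑(F n) := by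
  change ⇑((∑ n ∈ s, F n : Lp E p μ) : α →ₘ[μ] E) =ᵐ[μ] _
  rw [AddSubgroup.val_finsetSum]
  exact AEEqFun.coeFn_finset_sum s _

lemma AEEqFun.coeFn_sum_smul {𝕜 : Type*} [TopologicalSpace E] [AddCommMonoid E] [ContinuousAdd E]
    [SMul 𝕜 E] [ContinuousConstSMul 𝕜 E] (s : Finset ι) (a : ι → 𝕜) (F : ι → α →ₘ[μ] E) :
    ⇑(∑ n ∈ s, a n • F n) =ᵐ[μ] fun x => ∑ n ∈ s, a n • F n x := by
  filter_upwards [AEEqFun.coeFn_finset_sum s fun n => a n • F n,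
    (Filter.eventually_all_finset s).2 fun n _ => AEEqFun.coeFn_smul (a n) (F n)] with x hsum hsmul
  rw [hsum, Finset.sum_apply]
  exact sum_congr rfl hsmul

lemma Lp.coeFn_sum_smul [NormedAddCommGroup E] [NormedSpace ℝ E] {p : ℝ≥0∞} [Fact (1 ≤ p)]
    (s : Finset ι) (a : ι → ℝ) (F : ι → Lp E p μ) :
    ⇑(∑ n ∈ s, a n • F n) =ᵐ[μ] fun x => ∑ n ∈ s, a n • F n x := by
  filter_upwards [Lp.coeFn_finset_sum s fun n => a n • F n,
    (Filter.eventually_all_finset s).2 fun n _ => Lp.coeFn_smul (a n) (F n)] with x hsum hsmul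
  rw [hsum, Finset.sum_apply]
  exact sum_congr rfl hsmul

end CoeFn

section Pairwise

variable {α ι : Type*} [MeasurableSpace α] {μ : Measure α}

lemma ae_pairwise_of_pairwise_ae [Countable ι] {P : ι → ι → α → Prop}
    (h : Pairwise fun m n => ∀ᵐ x ∂μ, P m n x) : ∀ᵐ x ∂μ, Pairwise fun m n => P m n x := by
  refine ae_all_iff.2 fun m => ae_all_iff.2 fun n => ?_
  by_cases hmn : m = n
  · exact .of_forall fun _ h => absurd hmn h
  · filter_upwards [h hmn] with x hx _ using hx

end Pairwise

section DisjointSupport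

variable {α ι E : Type*} [MeasurableSpace α] {μ : Measure α} [NormedAddCommGroup E] {p : ℝ≥0∞}
  {s : Finset ι} {F : ι → α → E}

lemma eLpNorm_sum_rpow_of_pairwise (hp0 : p ≠ 0) (hp_top : p ≠ ∞)
    (hF : ∀ n ∈ s, AEStronglyMeasurable (F n) μ)
    (hdisj : ∀ᵐ x ∂μ, (s : Set ι).Pairwise fun m n => F m x = 0 ∨ F n x = 0) :
    eLpNorm (∑ n ∈ s, F n) p μ ^ p.toReal = ∑ n ∈ s, eLpNorm (F n) p μ ^ p.toReal := by
  have hp : 0 < p.toReal := ENNReal.toReal_pos hp0 hp_top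
  simp_rw [eLpNorm_eq_eLpNorm' hp0 hp_top, ← lintegral_rpow_enorm_eq_rpow_eLpNorm' hp]
  rw [← lintegral_finsetSum' _ fun n hn => (hF n hn).enorm.pow_const _]
  refine lintegral_congr_ae ?_
  filter_upwards [hdisj] with x hx
  rw [Finset.sum_apply]
  exact apply_sum_of_pairwise_eq_zero_or_eq_zero hx (ψ := fun y => ‖y‖ₑ ^ p.toReal) (by simp [hp])

lemma eLpNorm_sum_le_of_pairwise (hp0 : p ≠ 0) (hp_top : p ≠ ∞)
    (hF : ∀ n ∈ s, AEStronglyMeasurable (F n) μ)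
    (hdisj : ∀ᵐ x ∂μ, (s : Set ι).Pairwise fun m n => F m x = 0 ∨ F n x = 0) {B : ℝ≥0∞}
    (hB : ∀ n ∈ s, eLpNorm (F n) p μ ≤ B) :
    eLpNorm (∑ n ∈ s, F n) p μ ≤ (#s : ℝ≥0∞) ^ p.toReal⁻¹ * B := by
  have hp : 0 < p.toReal := ENNReal.toReal_pos hp0 hp_top
  have hpow : eLpNorm (∑ n ∈ s, F n) p μ ^ p.toReal ≤ #s * B ^ p.toReal := by
    rw [eLpNorm_sum_rpow_of_pairwise hp0 hp_top hF hdisj, ← nsmul_eq_mul, ← sum_const]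
    exact sum_le_sum fun n hn => ENNReal.rpow_le_rpow (hB n hn) hp.le
  calc eLpNorm (∑ n ∈ s, F n) p μ
      = (eLpNorm (∑ n ∈ s, F n) p μ ^ p.toReal) ^ p.toReal⁻¹ :=
        (ENNReal.rpow_rpow_inv hp.ne' _).symm
    _ ≤ (#s * B ^ p.toReal) ^ p.toReal⁻¹ := ENNReal.rpow_le_rpow hpow (inv_nonneg.mpr hp.le)
    _ = (#s : ℝ≥0∞) ^ p.toReal⁻¹ * B := by
        rw [ENNReal.mul_rpow_of_nonneg _ _ (inv_nonneg.mpr hp.le), ENNReal.rpow_rpow_inv hp.ne']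

lemma eLpNorm_sum_of_pairwise_of_eLpNorm_eq_one (hp0 : p ≠ 0) (hp_top : p ≠ ∞)
    (hF : ∀ n ∈ s, AEStronglyMeasurable (F n) μ)
    (hdisj : ∀ᵐ x ∂μ, (s : Set ι).Pairwise fun m n => F m x = 0 ∨ F n x = 0)
    (h1 : ∀ n ∈ s, eLpNorm (F n) p μ = 1) :
    eLpNorm (∑ n ∈ s, F n) p μ = (#s : ℝ≥0∞) ^ p.toReal⁻¹ := by
  have hp : 0 < p.toReal := ENNReal.toReal_pos hp0 hp_top
  rw [← ENNReal.rpow_rpow_inv hp.ne' (eLpNorm _ p μ),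
    eLpNorm_sum_rpow_of_pairwise hp0 hp_top hF hdisj,
    sum_congr rfl fun n hn => by rw [h1 n hn, ENNReal.one_rpow]]
  simp

lemma eLpNorm_average_norm_le (hp : 1 ≤ p) {β : Type*} {T : Finset β} {G : β → α → E}
    (hG : ∀ t ∈ T, AEStronglyMeasurable (G t) μ) {B : ℝ≥0∞} (hB : ∀ t ∈ T, eLpNorm (G t) p μ ≤ B) :
    eLpNorm (fun x => (#T : ℝ)⁻¹ * ∑ t ∈ T, ‖G t x‖) p μ ≤ B := by
  rcases T.eq_empty_or_nonempty with rfl | hT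
  · simp
  have hsum : eLpNorm (∑ t ∈ T, fun x => ‖G t x‖) p μ ≤ #T * B := by
    refine (eLpNorm_sum_le (fun t ht => (hG t ht).norm) hp).trans ?_
    rw [← nsmul_eq_mul, ← sum_const]
    exact sum_le_sum fun t ht => (eLpNorm_norm _).trans_le (hB t ht)
  have hT0 : (#T : ℝ≥0∞) ≠ 0 := by simpa using hT.ne_empty
  calc eLpNorm (fun x => (#T : ℝ)⁻¹ * ∑ t ∈ T, ‖G t x‖) p μ
      = (#T : ℝ≥0∞)⁻¹ * eLpNorm (∑ t ∈ T, fun x => ‖G t x‖) p μ := by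
        have hfun : (fun x => (#T : ℝ)⁻¹ * ∑ t ∈ T, ‖G t x‖)
            = (#T : ℝ)⁻¹ • ∑ t ∈ T, fun x => ‖G t x‖ := by
          ext x; simp [Finset.sum_apply]
        rw [hfun, eLpNorm_const_smul, enorm_inv (by simpa using hT.ne_empty)]
        simp
    _ ≤ (#T : ℝ≥0∞)⁻¹ * (#T * B) := mul_le_mul_right hsum _
    _ = B := ENNReal.inv_mul_cancel_left hT0 (ENNReal.natCast_ne_top _)

end DisjointSupport

section SignSums

variable {α ι E : Type*} [MeasurableSpace α] {μ : Measure α} [NormedAddCommGroup E]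
  [NormedSpace ℝ E] {p : ℝ≥0∞} [Fact (1 ≤ p)]

lemma Lp.norm_sum_smul_of_pairwise (hp_top : p ≠ ∞) {s : Finset ι} {g : ι → Lp E p μ}
    (hg1 : ∀ n ∈ s, ‖g n‖ = 1)
    (hdisj : ∀ᵐ x ∂μ, (s : Set ι).Pairwise fun m n => g m x = 0 ∨ g n x = 0) {a : ι → ℝ}
    (ha : ∀ n ∈ s, |a n| = 1) :
    ‖∑ n ∈ s, a n • g n‖ = (#s : ℝ) ^ p.toReal⁻¹ := by
  have hp0 : p ≠ 0 := (zero_lt_one.trans_le Fact.out).ne'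
  have hfun : (fun x => ∑ n ∈ s, a n • g n x) = ∑ n ∈ s, a n • ⇑(g n) := by
    ext x; simp [Finset.sum_apply]
  have hF1 : ∀ n ∈ s, eLpNorm (a n • ⇑(g n)) p μ = 1 := fun n hn => by
    rw [eLpNorm_const_smul, ← Lp.enorm_def, Real.enorm_eq_ofReal_abs, ha n hn,
      ← ofReal_norm, hg1 n hn]
    simp
  rw [Lp.norm_def, eLpNorm_congr_ae (Lp.coeFn_sum_smul s a g), hfun,
    eLpNorm_sum_of_pairwise_of_eLpNorm_eq_one hp0 hp_top
      (fun n _ => (Lp.aestronglyMeasurable _).const_smul _) ?_ hF1,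
    ← ENNReal.toReal_rpow, ENNReal.toReal_natCast]
  filter_upwards [hdisj] with x hx m hm n hn hmn
  exact (hx hm hn hmn).imp (fun h => by simp [h]) fun h => by simp [h]

end SignSums

lemma eLpNorm_le_ofReal_of_norm_le {α E : Type*} [MeasurableSpace α] {μ : Measure α}
    [NormedAddCommGroup E] {p : ℝ≥0∞} {F : α →ₘ[μ] E} (hF : F ∈ Lp E p μ) {R : ℝ}
    (h : ‖(⟨F, hF⟩ : Lp E p μ)‖ ≤ R) : eLpNorm F p μ ≤ ENNReal.ofReal R :=
  (ENNReal.le_ofReal_iff_toReal_le (Lp.eLpNorm_ne_top ⟨F, hF⟩) (ENNReal.toReal_nonneg.trans h)).2 h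

end MeasureTheory

section SignAveraging

variable {α ι : Type*} [MeasurableSpace α] {μ : Measure α} {p : ℝ≥0∞} [DecidableEq ι]

theorem enorm_le_two_mul_of_eLpNorm_sum_rademacher_le (hp : 1 ≤ p) (hp_top : p ≠ ∞)
    {s : Finset ι} (hs : s.Nonempty) {G U : ι → α → ℝ} (hG : ∀ n, Measurable (G n))
    (hU : ∀ n, Measurable (U n))
    (hdisj : ∀ᵐ x ∂μ, (s : Set ι).Pairwise fun m n => G m x = 0 ∨ G n x = 0)
    (hG1 : ∀ n ∈ s, eLpNorm (G n) p μ = 1) {B : ℝ≥0∞} (hUB : ∀ n ∈ s, eLpNorm (U n) p μ ≤ B)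
    (c : ℝ) (hD : ∀ t : Finset ι, eLpNorm (fun x => ∑ n ∈ s, rademacher t n * (U n x - c * G n x))
      p μ ≤ (#s : ℝ≥0∞) ^ p.toReal⁻¹ * B) :
    ‖c‖ₑ ≤ 2 * B := by
  have hp0 : p ≠ 0 := (zero_lt_one.trans_le hp).ne'
  set K := (#s : ℝ≥0∞) ^ p.toReal⁻¹
  set A : α → ℝ := ∑ n ∈ s, (support (G n)).indicator fun x => |U n x|
  set E : α → ℝ := fun x => (#s.powerset : ℝ)⁻¹ *
    ∑ t ∈ s.powerset, ‖∑ n ∈ s, rademacher t n * (U n x - c * G n x)‖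
  have hAm : ∀ n, Measurable ((support (G n)).indicator fun x => |U n x|) := fun n =>
    (hU n).abs.indicator ((hG n) (measurableSet_singleton 0).compl)
  have hA : eLpNorm A p μ ≤ K * B := by
    refine eLpNorm_sum_le_of_pairwise hp0 hp_top (fun n _ => (hAm n).aestronglyMeasurable) ?_
      fun n hn => (eLpNorm_indicator_le _).trans ((eLpNorm_norm (U n)).trans_le (hUB n hn))
    filter_upwards [hdisj] with x hx m hm n hn hmn
    exact (hx hm hn hmn).imp (fun h => Set.indicator_of_notMem (by simpa using h) _)
      (fun h => Set.indicator_of_notMem (by simpa using h) _)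
  have hE : eLpNorm E p μ ≤ K * B :=
    eLpNorm_average_norm_le hp (fun t _ => by fun_prop) fun t _ => hD t
  have hpt : ∀ᵐ x ∂μ, ‖c * ∑ n ∈ s, G n x‖ ≤ ‖A x + E x‖ := by
    filter_upwards [hdisj] with x hx
    have hA0 : 0 ≤ A x := by
      simp only [A, Finset.sum_apply]
      exact sum_nonneg fun n _ => Set.indicator_nonneg (fun _ _ => abs_nonneg _) _
    have hE0 : 0 ≤ E x := by positivity
    rw [Real.norm_of_nonneg (add_nonneg hA0 hE0)]
    rcases forall_eq_zero_or_exists_unique_ne_zero hx with hzero | ⟨m, hm, hm0, hrest⟩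
    · simp [sum_eq_zero hzero]
      positivity
    · have hAx : A x = |U m x| := by
        simp only [A, Finset.sum_apply]
        rw [sum_eq_single_of_mem m hm fun n hn hnm =>
          Set.indicator_of_notMem (by simpa using hrest n hn hnm) _]
        exact Set.indicator_of_mem hm0 _
      have hEx : |U m x - c * G m x| ≤ E x := by
        simpa [E, card_powerset] using
          abs_le_average_abs_sum_rademacher_mul s hm fun n => U n x - c * G n x
      rw [sum_eq_single_of_mem m hm hrest, hAx, Real.norm_eq_abs]
      calc |c * G m x| = |U m x - (U m x - c * G m x)| := by ring_nf
        _ ≤ |U m x| + |U m x - c * G m x| := abs_sub _ _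
        _ ≤ |U m x| + E x := by gcongr
  have hsumG : eLpNorm (∑ n ∈ s, G n) p μ = K :=
    eLpNorm_sum_of_pairwise_of_eLpNorm_eq_one hp0 hp_top (fun n _ => (hG n).aestronglyMeasurable)
      hdisj hG1
  have hK0 : K ≠ 0 := by simp [K, hs.ne_empty]
  have hKtop : K ≠ ∞ := by simp [K]
  refine (ENNReal.mul_le_mul_iff_left hK0 hKtop).mp ?_
  calc ‖c‖ₑ * K = eLpNorm (c • ∑ n ∈ s, G n) p μ := by rw [eLpNorm_const_smul, hsumG]
    _ ≤ eLpNorm (A + E) p μ := eLpNorm_mono_ae (by simpa [Finset.sum_apply] using hpt)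
    _ ≤ eLpNorm A p μ + eLpNorm E p μ :=
        eLpNorm_add_le (by fun_prop) (by fun_prop) hp
    _ ≤ K * B + K * B := add_le_add hA hE
    _ = 2 * B * K := by ring

end SignAveraging

section KaltonPeck

variable {p : ℝ≥0∞} [Fact (1 ≤ p)] {ι : Type*}

lemma coeFn_KPLp (f : Lp ℝ p μ01) : KPLp p f =ᵐ[μ01] fun x => f x * Real.log (|f x| / ‖f‖) :=
  AEEqFun.coeFn_mk _ _

lemma mul_mul_log_abs_mul_div (a y r K : ℝ) (hr : r ≠ 0) (hK : K ≠ 0) :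
    a * y * Real.log (|a * y| / K) =
      a * (y * Real.log (|y| / r) + Real.log (|a| * r / K) * y) := by
  rcases eq_or_ne a 0 with rfl | ha
  · simp
  rcases eq_or_ne y 0 with rfl | hy
  · simp
  have hsplit : |a * y| / K = |y| / r * (|a| * r / K) := by
    rw [abs_mul]; field_simp
  rw [hsplit, Real.log_mul (by positivity) (by positivity)]
  ring

theorem KPLp_sum_smul_ae {s : Finset ι} {g : ι → Lp ℝ p μ01} (hg : ∀ n ∈ s, g n ≠ 0)
    (hdisj : ∀ᵐ x ∂μ01, (s : Set ι).Pairwise fun m n => g m x = 0 ∨ g n x = 0) (a : ι → ℝ)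
    (hsum : ∑ n ∈ s, a n • g n ≠ 0) :
    KPLp p (∑ n ∈ s, a n • g n) =ᵐ[μ01] fun x => ∑ n ∈ s, a n *
      (KPLp p (g n) x + Real.log (|a n| * ‖g n‖ / ‖∑ n ∈ s, a n • g n‖) * g n x) := by
  filter_upwards [coeFn_KPLp (∑ n ∈ s, a n • g n), Lp.coeFn_sum_smul s a g,
    (Filter.eventually_all_finset s).2 fun n _ => coeFn_KPLp (g n), hdisj]
    with x hK hcoe hKg hx
  simp only [hK, hcoe, smul_eq_mul]
  rw [apply_sum_of_pairwise_eq_zero_or_eq_zero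
    (ψ := fun y => y * Real.log (|y| / ‖∑ n ∈ s, a n • g n‖)) ?_ (by simp)]
  · refine sum_congr rfl fun n hn => ?_
    rw [hKg n hn]
    exact mul_mul_log_abs_mul_div _ _ _ _ (norm_ne_zero_iff.2 (hg n hn)) (norm_ne_zero_iff.2 hsum)
  · exact fun m hm n hn hmn => (hx hm hn hmn).imp (fun h => by simp [h]) fun h => by simp [h]

variable [DecidableEq ι] {M : Submodule ℝ (Lp ℝ p μ01)}

lemma norm_coe_sum_rademacher_smul (hp_top : p ≠ ∞) {s : Finset ι} {g : ι → M}
    (hg1 : ∀ n ∈ s, ‖(g n : Lp ℝ p μ01)‖ = 1)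
    (hdisj : ∀ᵐ x ∂μ01, (s : Set ι).Pairwise fun m n =>
      (g m : Lp ℝ p μ01) x = 0 ∨ (g n : Lp ℝ p μ01) x = 0) (t : Finset ι) :
    ‖((∑ n ∈ s, rademacher t n • g n : M) : Lp ℝ p μ01)‖ = (#s : ℝ) ^ p.toReal⁻¹ := by
  push_cast
  exact Lp.norm_sum_smul_of_pairwise hp_top hg1 hdisj fun n _ => abs_rademacher t n

lemma KPLp_sub_apply_sum_rademacher_ae (hp_top : p ≠ ∞) (L : M →ₗ[ℝ] (ℝ →ₘ[μ01] ℝ))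
    {s : Finset ι} (hs : s.Nonempty) {g : ι → M} (hg1 : ∀ n ∈ s, ‖(g n : Lp ℝ p μ01)‖ = 1)
    (hdisj : ∀ᵐ x ∂μ01, (s : Set ι).Pairwise fun m n =>
      (g m : Lp ℝ p μ01) x = 0 ∨ (g n : Lp ℝ p μ01) x = 0) (t : Finset ι) :
    ⇑(KPLp p ↑(∑ n ∈ s, rademacher t n • g n) - L (∑ n ∈ s, rademacher t n • g n))
      =ᵐ[μ01] fun x => ∑ n ∈ s, rademacher t n *
        ((KPLp p (g n) - L (g n)) x - Real.log #s / p.toReal * (g n : Lp ℝ p μ01) x) := by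
  have hcoe : ((∑ n ∈ s, rademacher t n • g n : M) : Lp ℝ p μ01)
      = ∑ n ∈ s, rademacher t n • (g n : Lp ℝ p μ01) := by simp
  have hnorm : ‖∑ n ∈ s, rademacher t n • (g n : Lp ℝ p μ01)‖ = (#s : ℝ) ^ p.toReal⁻¹ :=
    hcoe ▸ norm_coe_sum_rademacher_smul hp_top hg1 hdisj t
  have hs0 : (0 : ℝ) < #s := by exact_mod_cast hs.card_pos
  have hlog : Real.log (1 * 1 / (#s : ℝ) ^ p.toReal⁻¹) = -(Real.log #s / p.toReal) := by
    rw [one_mul, one_div, Real.log_inv, Real.log_rpow hs0]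
    ring
  have hsum0 : ∑ n ∈ s, rademacher t n • (g n : Lp ℝ p μ01) ≠ 0 := by
    rw [← norm_ne_zero_iff, hnorm]
    positivity
  rw [map_sum]
  simp only [map_smul]
  filter_upwards [AEEqFun.coeFn_sub (KPLp p ↑(∑ n ∈ s, rademacher t n • g n))
      (∑ n ∈ s, rademacher t n • L (g n)),
    hcoe ▸ KPLp_sum_smul_ae (fun n hn h => by simpa [h] using hg1 n hn) hdisj _ hsum0,
    AEEqFun.coeFn_sum_smul s (rademacher t) fun n => L (g n),
    (Filter.eventually_all_finset s).2 fun n _ => AEEqFun.coeFn_sub (KPLp p (g n)) (L (g n))]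
    with x hsub hK hL hKL
  rw [hsub, Pi.sub_apply, hK, hL, ← sum_sub_distrib]
  refine sum_congr rfl fun n hn => ?_
  rw [hKL n hn, Pi.sub_apply, abs_rademacher, hg1 n hn, hcoe, hnorm, hlog, smul_eq_mul]
  ring

theorem KPLp_not_bounded_of_disjoint_unit (hp_top : p ≠ ∞) (g : ℕ → M)
    (hg1 : ∀ n, ‖(g n : Lp ℝ p μ01)‖ = 1)
    (hdisj : ∀ᵐ x ∂μ01, Pairwise fun m n => (g m : Lp ℝ p μ01) x = 0 ∨ (g n : Lp ℝ p μ01) x = 0) :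
    ¬ ∃ (L : M →ₗ[ℝ] (ℝ →ₘ[μ01] ℝ)) (C : ℝ), ∀ y : M,
      eLpNorm (KPLp p ↑y - L y) p μ01 ≤ ENNReal.ofReal (C * ‖(y : Lp ℝ p μ01)‖) := by
  rintro ⟨L, C, hL⟩
  have hp : 0 < p.toReal := ENNReal.toReal_pos (zero_lt_one.trans_le Fact.out).ne' hp_top
  obtain ⟨N, hN1, hNC⟩ : ∃ N : ℕ, 1 ≤ N ∧ max (2 * C) 0 < Real.log N / p.toReal :=
    ((Filter.eventually_ge_atTop 1).and
      (((Real.tendsto_log_atTop.comp tendsto_natCast_atTop_atTop).atTop_div_const hp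
        ).eventually_gt_atTop _)).exists
  have hs : (range N).Nonempty := nonempty_range_iff.2 (by omega)
  have hdisjN := hdisj.mono fun x hx => hx.set_pairwise (range N : Set ℕ)
  have hle := enorm_le_two_mul_of_eLpNorm_sum_rademacher_le Fact.out hp_top hs
    (G := fun n => ⇑(g n : Lp ℝ p μ01)) (U := fun n => ⇑(KPLp p ↑(g n) - L (g n)))
    (fun n => (Lp.stronglyMeasurable _).measurable)
    (fun n => (AEEqFun.stronglyMeasurable _).measurable) hdisjN
    (fun n _ => by rw [← Lp.enorm_def, ← ofReal_norm, hg1 n, ENNReal.ofReal_one])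
    (fun n _ => by simpa [hg1 n] using hL (g n)) (Real.log #(range N) / p.toReal) fun t => ?_
  · rw [card_range, Real.enorm_eq_ofReal_abs, abs_of_pos (lt_of_le_of_lt (le_max_right _ _) hNC),
      ← ENNReal.ofReal_ofNat 2, ← ENNReal.ofReal_mul (by norm_num),
      ENNReal.ofReal_le_ofReal_iff'] at hle
    rcases hle with hle | hle <;> linarith [le_max_left (2 * C) 0, le_max_right (2 * C) 0]
  · rw [← eLpNorm_congr_ae (KPLp_sub_apply_sum_rademacher_ae hp_top L hs (fun n _ => hg1 n)
      hdisjN t)]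
    refine (hL _).trans_eq ?_
    rw [norm_coe_sum_rademacher_smul hp_top (fun n _ => hg1 n) hdisjN,
      ENNReal.ofReal_mul' (by positivity),
      ← ENNReal.ofReal_rpow_of_pos (by exact_mod_cast hs.card_pos), ENNReal.ofReal_natCast,
      mul_comm]

end KaltonPeck

theorem stmt5_general (p : ℝ≥0∞) [Fact (1 ≤ p)] (hptop : p ≠ ⊤)
    (f : ℕ → Lp ℝ p μ01) (hne : ∀ n, f n ≠ 0)
    (hdisj : ∀ m n, m ≠ n → ∀ᵐ t ∂μ01, (f m : ℝ → ℝ) t = 0 ∨ (f n : ℝ → ℝ) t = 0) :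
    ¬ ∃ (L : ((Submodule.span ℝ (Set.range f)).topologicalClosure) →ₗ[ℝ] (ℝ →ₘ[μ01] ℝ))
        (C : ℝ),
        ∀ x : ((Submodule.span ℝ (Set.range f)).topologicalClosure),
          ∃ h : KPLp p ↑x - L x ∈ Lp ℝ p μ01,
            ‖(⟨KPLp p ↑x - L x, h⟩ : Lp ℝ p μ01)‖ ≤ C * ‖(x : Lp ℝ p μ01)‖ := by
  rintro ⟨L, C, hL⟩
  let g : ℕ → (Submodule.span ℝ (Set.range f)).topologicalClosure := fun n =>
    ⟨‖f n‖⁻¹ • f n, Submodule.le_topologicalClosure _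
      (Submodule.smul_mem _ _ (Submodule.subset_span ⟨n, rfl⟩))⟩
  have hg1 : ∀ n, ‖(g n : Lp ℝ p μ01)‖ = 1 := fun n => by
    simp [g, norm_smul, inv_mul_cancel₀ (norm_ne_zero_iff.2 (hne n))]
  have hdisj_g : ∀ᵐ x ∂μ01, Pairwise fun m n =>
      (g m : Lp ℝ p μ01) x = 0 ∨ (g n : Lp ℝ p μ01) x = 0 := by
    filter_upwards [ae_pairwise_of_pairwise_ae hdisj,
      ae_all_iff.2 fun n => Lp.coeFn_smul ‖f n‖⁻¹ (f n)] with x hx hsmul m n hmn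
    simp only [g, hsmul, Pi.smul_apply, smul_eq_mul]
    exact (hx hmn).imp (fun h => by simp [h]) fun h => by simp [h]
  refine KPLp_not_bounded_of_disjoint_unit hptop g hg1 hdisj_g ⟨L, C, fun y => ?_⟩
  obtain ⟨hmem, hbound⟩ := hL y
  exact eLpNorm_le_ofReal_of_norm_le hmem hbound

/-- for `1 < p < ∞` the Kalton–Peck map on `L_p(0,1)` is disjointly
singular: for every sequence `(f_n)` of nonzero pairwise disjointly supported functions,
`𝒦` is not trivial on the closed linear span of `(f_n)`. -/
theorem stmt5 (p : ℝ≥0∞) [Fact (1 ≤ p)] (hp1 : 1 < p) (hptop : p ≠ ⊤)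
    (f : ℕ → Lp ℝ p μ01) (hne : ∀ n, f n ≠ 0)
    (hdisj : ∀ m n, m ≠ n → ∀ᵐ t ∂μ01, (f m : ℝ → ℝ) t = 0 ∨ (f n : ℝ → ℝ) t = 0) :
    ¬ ∃ (L : ((Submodule.span ℝ (Set.range f)).topologicalClosure) →ₗ[ℝ] (ℝ →ₘ[μ01] ℝ))
        (C : ℝ),
        ∀ x : ((Submodule.span ℝ (Set.range f)).topologicalClosure),
          ∃ h : KPLp p ↑x - L x ∈ Lp ℝ p μ01,
            ‖(⟨KPLp p ↑x - L x, h⟩ : Lp ℝ p μ01)‖ ≤ C * ‖(x : Lp ℝ p μ01)‖ :=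
  stmt5_general p hptop f hne hdisj
end

section
/- Fix α ∈ ℝ and define φ_α : [0,∞) → ℂ by φ_α(0) = 0 and φ_α(t) = t^{1+iα} = t·e^{iα·log t} for t > 0. Then |φ_α(s) − φ_α(t)| ≥ |s − t| for all s, t ≥ 0. Consequently, φ_α is an expansive Lipschitz function with φ_α(0) = 0. -/
/-!
On `[0,∞)` we have `φ_α(t) = t^{1+iα}` (complex power) and `‖φ_α(t)‖ = t`. The reverse triangle
inequality then gives `|s - t| ≤ ‖φ_α(s) - φ_α(t)‖`, which is expansiveness with `N = M`.
For `t > 0` the derivative `(1+iα) t^{iα}` has constant modulus `‖1+iα‖`, so `φ_α` is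
`‖1+iα‖`-Lipschitz on `(0,∞)` by the mean value theorem, and on `[0,∞)` by continuity.
-/

/-- The function `φ_α(t) = t^{1+iα} = t·e^{iα·log t}` for `t > 0`, with `φ_α(0) = 0`
(we only use its values on `[0,∞)`). -/
noncomputable def phiAlpha (α : ℝ) (t : ℝ) : ℂ :=
  if t = 0 then 0 else (t : ℂ) * Complex.exp (Complex.I * (α : ℂ) * (Real.log t : ℂ))

open Complex Set

lemma phiAlpha_zero (α : ℝ) : phiAlpha α 0 = 0 := if_pos rfl

lemma norm_phiAlpha (α t : ℝ) : ‖phiAlpha α t‖ = |t| := by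
  rcases eq_or_ne t 0 with rfl | ht
  · simp [phiAlpha_zero]
  · rw [phiAlpha, if_neg ht, norm_mul, norm_exp, mul_right_comm]
    simp

lemma abs_sub_le_norm_phiAlpha_sub (α : ℝ) {s t : ℝ} (hs : 0 ≤ s) (ht : 0 ≤ t) :
    |s - t| ≤ ‖phiAlpha α s - phiAlpha α t‖ := by
  simpa only [norm_phiAlpha, abs_of_nonneg hs, abs_of_nonneg ht] using
    abs_norm_sub_norm_le (phiAlpha α s) (phiAlpha α t)

lemma phiAlpha_eq_cpow (α : ℝ) {t : ℝ} (ht : 0 ≤ t) :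
    phiAlpha α t = (t : ℂ) ^ (1 + α * I) := by
  rcases ht.eq_or_lt with rfl | ht
  · rw [phiAlpha_zero, ofReal_zero, zero_cpow (by simp [Complex.ext_iff])]
  · rw [phiAlpha, if_neg ht.ne', cpow_add _ _ (ofReal_ne_zero.2 ht.ne'), cpow_one,
      cpow_def_of_ne_zero (ofReal_ne_zero.2 ht.ne'), ← ofReal_log ht.le]
    ring_nf

lemma lipschitzOnWith_ofReal_cpow_of_re_eq_one {c : ℂ} (hc : c.re = 1) :
    LipschitzOnWith ‖c‖₊ (fun t : ℝ => (t : ℂ) ^ c) (Ici 0) := by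
  have hc0 : c ≠ 0 := fun h => by simp [h] at hc
  rw [← closure_Ioi]
  refine .closure (continuous_ofReal_cpow_const (by rw [hc]; exact one_pos)).continuousOn ?_
  refine (convex_Ioi 0).lipschitzOnWith_of_nnnorm_hasDerivWithin_le
    (fun t ht => (hasDerivAt_ofReal_cpow_const (ne_of_gt ht) hc0).hasDerivWithinAt) fun t ht => ?_
  rw [← NNReal.coe_le_coe, coe_nnnorm, coe_nnnorm, norm_mul,
    norm_cpow_eq_rpow_re_of_pos ht, sub_re, hc, one_re, sub_self, Real.rpow_zero, mul_one]

lemma lipschitzOnWith_phiAlpha (α : ℝ) :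
    LipschitzOnWith ‖1 + α * I‖₊ (phiAlpha α) (Ici 0) := by
  intro s hs t ht
  rw [phiAlpha_eq_cpow α hs, phiAlpha_eq_cpow α ht]
  exact lipschitzOnWith_ofReal_cpow_of_re_eq_one (by simp) hs ht

/-- `|φ_α(s) − φ_α(t)| ≥ |s − t|` for all `s, t ≥ 0`; consequently `φ_α` is
an expansive Lipschitz function on `[0,∞)` with `φ_α(0) = 0`. -/
theorem stmt7 (α : ℝ) :
    (∀ s t : ℝ, 0 ≤ s → 0 ≤ t → |s - t| ≤ ‖phiAlpha α s - phiAlpha α t‖) ∧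
    (∃ K : NNReal, LipschitzOnWith K (phiAlpha α) (Set.Ici 0)) ∧
    (∀ M : ℝ, 0 < M → ∃ N : ℝ, 0 < N ∧
      ∀ s t : ℝ, 0 ≤ s → 0 ≤ t → N ≤ |s - t| → M ≤ ‖phiAlpha α s - phiAlpha α t‖) ∧
    phiAlpha α 0 = 0 :=
  ⟨fun _ _ hs ht => abs_sub_le_norm_phiAlpha_sub α hs ht,
    ⟨_, lipschitzOnWith_phiAlpha α⟩,
    fun M hM => ⟨M, hM, fun _ _ hs ht hN => hN.trans (abs_sub_le_norm_phiAlpha_sub α hs ht)⟩,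
    phiAlpha_zero α⟩
end

section
/- Let 1 < p < ∞ and let Ω be an exact centralizer on real ℓ_p with Ω(e_n) = 0 for every n, where (e_n) is the unit vector basis. If Ω is trivial on all of ℓ_p (there exist a linear map ℓ : ℓ_p → ℝ^ℕ and a constant K with Ω(x) − ℓ(x) ∈ ℓ_p and ‖Ω(x) − ℓ(x)‖_p ≤ K‖x‖_p for all x), then Ω is bounded: there is a constant C such that Ω(x) ∈ ℓ_p and ‖Ω(x)‖_p ≤ C‖x‖_p for all x ∈ ℓ_p. -/
open scoped ENNReal

open Finset

/-!
Let `ℓ` be linear with `‖Ω x - ℓ x‖_p ≤ K‖x‖_p` and let `λᵢ = (ℓ eᵢ)ᵢ`; testing on `eᵢ`,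
where `Ω` vanishes, gives `|λᵢ| ≤ K`. For a finite set `F` and `S ⊆ F`, let `u_S` be the unit
that is `-1` exactly on `S`. Exactness gives `u_S · Ω(u_S x) = Ω x`. Since `u_S x - x` is finitely
supported, linearity of `ℓ` (which need not be continuous) gives
`ℓ(u_{S ∪ {i}} x)ᵢ = ℓ(u_S x)ᵢ - 2 xᵢ λᵢ` for `i ∉ S`, so the average of `u_S · ℓ(u_S x)` over
the `2^|F|` sets `S ⊆ F` is `λ x` on `F`. Hence `Ω x - λ x` is, on `F`, the average of
`u_S · (Ω - ℓ)(u_S x)`, and Jensen's inequality bounds its `p`-th power sum over `F` by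
`(K‖x‖)^p`. So `Ω = (Ω - λ) + λ` is bounded with constant `2K`.
-/

variable {ι : Type*} {p : ℝ≥0∞}

def LpNormLE (p : ℝ≥0∞) (f : ι → ℝ) (C : ℝ) : Prop :=
  ∃ h : Memℓp f p, ‖(⟨f, h⟩ : lp (fun _ : ι => ℝ) p)‖ ≤ C

namespace LpNormLE

variable {f g : ι → ℝ} {C D : ℝ}

theorem nonneg [Fact (1 ≤ p)] (hf : LpNormLE p f C) : 0 ≤ C :=
  let ⟨_, h⟩ := hf; (norm_nonneg _).trans h

theorem norm_apply_le [Fact (1 ≤ p)] (hf : LpNormLE p f C) (i : ι) : ‖f i‖ ≤ C :=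
  let ⟨hmem, h⟩ := hf
  (lp.norm_apply_le_norm (zero_lt_one.trans_le Fact.out).ne'
    (⟨f, hmem⟩ : lp (fun _ : ι => ℝ) p) i).trans h

theorem sum_rpow_le [Fact (1 ≤ p)] (hp : 0 < p.toReal) (hf : LpNormLE p f C) (s : Finset ι) :
    ∑ i ∈ s, ‖f i‖ ^ p.toReal ≤ C ^ p.toReal :=
  let ⟨hmem, h⟩ := hf
  (lp.sum_rpow_le_norm_rpow hp (⟨f, hmem⟩ : lp (fun _ : ι => ℝ) p) s).trans
    (Real.rpow_le_rpow (norm_nonneg _) h hp.le)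

theorem of_forall_sum_rpow_le (hp : 0 < p.toReal) (hC : 0 ≤ C)
    (hf : ∀ s : Finset ι, ∑ i ∈ s, ‖f i‖ ^ p.toReal ≤ C ^ p.toReal) : LpNormLE p f C :=
  ⟨memℓp_gen' hf, lp.norm_le_of_forall_sum_le hp hC hf⟩

theorem add [Fact (1 ≤ p)] (hf : LpNormLE p f C) (hg : LpNormLE p g D) :
    LpNormLE p (f + g) (C + D) := by
  obtain ⟨hfm, hfC⟩ := hf
  obtain ⟨hgm, hgD⟩ := hg
  exact ⟨hfm.add hgm, (norm_add_le (⟨f, hfm⟩ : lp (fun _ : ι => ℝ) p) ⟨g, hgm⟩).trans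
    (add_le_add hfC hgD)⟩

end LpNormLE

theorem lpNormLE_mul_of_forall_norm_le [Fact (1 ≤ p)] (hp : 0 < p.toReal) {a : ι → ℝ} {K : ℝ}
    (hK : 0 ≤ K) (ha : ∀ i, ‖a i‖ ≤ K) (x : lp (fun _ : ι => ℝ) p) :
    LpNormLE p (fun i => a i * x i) (K * ‖x‖) := by
  refine .of_forall_sum_rpow_le hp (by positivity) fun s => ?_
  calc ∑ i ∈ s, ‖a i * x i‖ ^ p.toReal
      ≤ ∑ i ∈ s, K ^ p.toReal * ‖x i‖ ^ p.toReal := by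
        gcongr with i
        rw [← Real.mul_rpow hK (norm_nonneg _), norm_mul]
        gcongr
        exact ha i
    _ ≤ K ^ p.toReal * ‖x‖ ^ p.toReal := by
        rw [← mul_sum]
        gcongr
        exact lp.sum_rpow_le_norm_rpow hp x s
    _ = (K * ‖x‖) ^ p.toReal := (Real.mul_rpow hK (norm_nonneg _)).symm

theorem norm_rpow_le_mean_norm_rpow {E α : Type*} [NormedAddCommGroup E] [NormedSpace ℝ E]
    {s : Finset α} (hs : s.Nonempty) {f : α → E} {a : E} {q : ℝ} (hq : 1 ≤ q)
    (ha : #s • a = ∑ j ∈ s, f j) :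
    ‖a‖ ^ q ≤ (#s : ℝ)⁻¹ * ∑ j ∈ s, ‖f j‖ ^ q := by
  have hN : (0 : ℝ) < #s := by exact_mod_cast hs.card_pos
  have hw : ∑ _j ∈ s, (#s : ℝ)⁻¹ = 1 := by
    rw [sum_const, nsmul_eq_mul, mul_inv_cancel₀ hN.ne']
  have hmean : ‖a‖ ≤ ∑ j ∈ s, (#s : ℝ)⁻¹ * ‖f j‖ := by
    calc ‖a‖ = (#s : ℝ)⁻¹ * ‖∑ j ∈ s, f j‖ := by
          rw [← ha, RCLike.norm_nsmul ℝ, nsmul_eq_mul, inv_mul_cancel_left₀ hN.ne']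
      _ ≤ ∑ j ∈ s, (#s : ℝ)⁻¹ * ‖f j‖ := by
          rw [← mul_sum]
          gcongr
          exact norm_sum_le _ _
  calc ‖a‖ ^ q ≤ (∑ j ∈ s, (#s : ℝ)⁻¹ * ‖f j‖) ^ q := by gcongr
    _ ≤ ∑ j ∈ s, (#s : ℝ)⁻¹ * ‖f j‖ ^ q :=
        Real.rpow_arith_mean_le_arith_mean_rpow s _ _ (fun _ _ => by positivity) hw
          (fun _ _ => norm_nonneg _) hq
    _ = (#s : ℝ)⁻¹ * ∑ j ∈ s, ‖f j‖ ^ q := by rw [mul_sum]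

section SignChanges

variable [DecidableEq ι]

def signOn (S : Finset ι) (i : ι) : ℝ := if i ∈ S then -1 else 1

theorem signOn_eq_one_or_eq_neg_one (S : Finset ι) (i : ι) :
    signOn S i = 1 ∨ signOn S i = -1 := by
  unfold signOn
  split_ifs <;> simp

theorem signOn_mul_self (S : Finset ι) (i : ι) : signOn S i * signOn S i = 1 := by
  rcases signOn_eq_one_or_eq_neg_one S i with h | h <;> simp [h]

theorem norm_signOn_mul (S : Finset ι) (i : ι) (a : ℝ) : ‖signOn S i * a‖ = ‖a‖ := by
  rcases signOn_eq_one_or_eq_neg_one S i with h | h <;> simp [h]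

theorem sum_powerset_signOn_mul {F : Finset ι} {i : ι} (hi : i ∈ F) {g : Finset ι → ℝ} {c : ℝ}
    (hg : ∀ S, i ∉ S → g (insert i S) = g S - c) :
    2 * ∑ S ∈ F.powerset, signOn S i * g S = 2 ^ #F * c := by
  have hi' : i ∉ F.erase i := notMem_erase i F
  rw [← insert_erase hi, sum_powerset_insert hi', ← sum_add_distrib, card_insert_of_notMem hi']
  have hpair : ∀ S ∈ (F.erase i).powerset,
      signOn S i * g S + signOn (insert i S) i * g (insert i S) = c := by
    intro S hS
    have hiS : i ∉ S := fun h => hi' (mem_powerset.1 hS h)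
    simp [signOn, hiS, hg S hiS]
  rw [sum_congr rfl hpair, sum_const, card_powerset, nsmul_eq_mul]
  push_cast
  ring

def flipSigns (S : Finset ι) (x : lp (fun _ : ι => ℝ) p) : lp (fun _ : ι => ℝ) p :=
  ⟨fun i => signOn S i * x i, (lp.memℓp x).mono' fun i => (norm_signOn_mul S i _).le⟩

@[simp]
theorem flipSigns_apply (S : Finset ι) (x : lp (fun _ : ι => ℝ) p) (i : ι) :
    flipSigns S x i = signOn S i * x i := rfl

theorem norm_flipSigns [Fact (1 ≤ p)] (hp : 0 < p.toReal) (S : Finset ι)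
    (x : lp (fun _ : ι => ℝ) p) : ‖flipSigns S x‖ = ‖x‖ := by
  simp only [lp.norm_eq_tsum_rpow hp, flipSigns_apply, norm_signOn_mul]

theorem flipSigns_insert {S : Finset ι} {i : ι} (hi : i ∉ S) (x : lp (fun _ : ι => ℝ) p) :
    flipSigns (insert i S) x = flipSigns S x - (2 * x i) • lp.single p i 1 := by
  ext j
  rw [lp.coeFn_sub, lp.coeFn_smul, Pi.sub_apply, Pi.smul_apply, smul_eq_mul]
  rcases eq_or_ne j i with rfl | hj
  · simp [signOn, hi]
    ring
  · simp [signOn, hj]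

variable {Ω : lp (fun _ : ι => ℝ) p → (ι → ℝ)} {ℓ : lp (fun _ : ι => ℝ) p →ₗ[ℝ] (ι → ℝ)} {K : ℝ}

noncomputable def diagEntry (ℓ : lp (fun _ : ι => ℝ) p →ₗ[ℝ] (ι → ℝ)) (i : ι) : ℝ :=
  ℓ (lp.single p i 1) i

theorem sum_powerset_signOn_mul_linearMap_flipSigns (x : lp (fun _ : ι => ℝ) p) {F : Finset ι}
    {i : ι} (hi : i ∈ F) :
    ∑ S ∈ F.powerset, signOn S i * ℓ (flipSigns S x) i = 2 ^ #F * (diagEntry ℓ i * x i) := by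
  have hstep : ∀ S, i ∉ S →
      ℓ (flipSigns (insert i S) x) i = ℓ (flipSigns S x) i - 2 * x i * diagEntry ℓ i := by
    intro S hiS
    simp [flipSigns_insert hiS, diagEntry, mul_assoc]
  have := sum_powerset_signOn_mul (g := fun S => ℓ (flipSigns S x) i) hi hstep
  linarith

theorem sum_powerset_signOn_mul_apply_flipSigns
    (hΩ : ∀ S x i, Ω (flipSigns S x) i = signOn S i * Ω x i)
    (x : lp (fun _ : ι => ℝ) p) (F : Finset ι) (i : ι) :
    ∑ S ∈ F.powerset, signOn S i * Ω (flipSigns S x) i = 2 ^ #F * Ω x i := by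
  simp_rw [hΩ, ← mul_assoc, signOn_mul_self, one_mul, sum_const, card_powerset, nsmul_eq_mul]
  push_cast
  rfl

theorem sum_rpow_sub_diagEntry_mul_le [Fact (1 ≤ p)] (hp : 1 ≤ p.toReal)
    (hΩ : ∀ S x i, Ω (flipSigns S x) i = signOn S i * Ω x i)
    (hℓ : ∀ x, LpNormLE p (Ω x - ℓ x) (K * ‖x‖)) (x : lp (fun _ : ι => ℝ) p) (F : Finset ι) :
    ∑ i ∈ F, ‖Ω x i - diagEntry ℓ i * x i‖ ^ p.toReal ≤ (K * ‖x‖) ^ p.toReal := by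
  have hp0 : 0 < p.toReal := zero_lt_one.trans_le hp
  set d : Finset ι → ι → ℝ := fun S => Ω (flipSigns S x) - ℓ (flipSigns S x)
  set N : ℝ := (#F.powerset : ℝ)
  have hN : 0 < N := by positivity
  have hcoord : ∀ i ∈ F, ‖Ω x i - diagEntry ℓ i * x i‖ ^ p.toReal ≤
      N⁻¹ * ∑ S ∈ F.powerset, ‖d S i‖ ^ p.toReal := by
    intro i hi
    have haverage : #F.powerset • (Ω x i - diagEntry ℓ i * x i) =
        ∑ S ∈ F.powerset, signOn S i * d S i := by
      simp_rw [d, Pi.sub_apply, mul_sub, sum_sub_distrib,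
        sum_powerset_signOn_mul_apply_flipSigns hΩ,
        sum_powerset_signOn_mul_linearMap_flipSigns x hi, card_powerset, nsmul_eq_mul]
      push_cast
      ring
    simpa only [norm_signOn_mul] using
      norm_rpow_le_mean_norm_rpow (powerset_nonempty F) hp haverage
  calc ∑ i ∈ F, ‖Ω x i - diagEntry ℓ i * x i‖ ^ p.toReal
      ≤ ∑ i ∈ F, N⁻¹ * ∑ S ∈ F.powerset, ‖d S i‖ ^ p.toReal := sum_le_sum hcoord
    _ = N⁻¹ * ∑ S ∈ F.powerset, ∑ i ∈ F, ‖d S i‖ ^ p.toReal := by rw [← mul_sum, sum_comm]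
    _ ≤ N⁻¹ * ∑ _S ∈ F.powerset, (K * ‖x‖) ^ p.toReal := by
        gcongr with S
        simpa only [norm_flipSigns hp0] using (hℓ (flipSigns S x)).sum_rpow_le hp0 F
    _ = (K * ‖x‖) ^ p.toReal := by rw [sum_const, nsmul_eq_mul, inv_mul_cancel_left₀ hN.ne']

theorem lpNormLE_sub_diagEntry_mul [Fact (1 ≤ p)] (hp : 1 ≤ p.toReal)
    (hΩ : ∀ S x i, Ω (flipSigns S x) i = signOn S i * Ω x i)
    (hℓ : ∀ x, LpNormLE p (Ω x - ℓ x) (K * ‖x‖)) (x : lp (fun _ : ι => ℝ) p) :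
    LpNormLE p (Ω x - fun i => diagEntry ℓ i * x i) (K * ‖x‖) :=
  .of_forall_sum_rpow_le (zero_lt_one.trans_le hp) (hℓ x).nonneg
    (sum_rpow_sub_diagEntry_mul_le hp hΩ hℓ x)

theorem norm_diagEntry_le [Fact (1 ≤ p)] (hℓ : ∀ x, LpNormLE p (Ω x - ℓ x) (K * ‖x‖)) {i : ι}
    (hi : Ω (lp.single p i 1) = 0) : ‖diagEntry ℓ i‖ ≤ K := by
  have := (hℓ (lp.single p i 1)).norm_apply_le i
  simpa [hi, diagEntry, lp.norm_single (zero_lt_one.trans_le Fact.out)] using this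

end SignChanges

theorem stmt11_general (p : ℝ≥0∞) [Fact (1 ≤ p)] (hptop : p ≠ ⊤)
    (Ω : lp (fun _ : ℕ => ℝ) p → (ℕ → ℝ))
    -- `Ω` is exact: `Ω(u·x) = u·Ω(x)` for every unit `u`
    (hexact : ∀ u : ℕ → ℝ, (∀ n, u n = 1 ∨ u n = -1) →
      ∀ x y : lp (fun _ : ℕ => ℝ) p, (∀ n, y n = u n * x n) →
        ∀ n, Ω y n = u n * Ω x n)
    -- `Ω` vanishes on the unit vector basis
    (hbasis : ∀ n : ℕ, Ω (lp.single p n 1) = 0)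
    -- `Ω` is trivial on all of `ℓ_p`
    (htriv : ∃ (ℓ : lp (fun _ : ℕ => ℝ) p →ₗ[ℝ] (ℕ → ℝ)) (K : ℝ),
      ∀ x : lp (fun _ : ℕ => ℝ) p, ∃ h : Memℓp (Ω x - ℓ x) p,
        ‖(⟨Ω x - ℓ x, h⟩ : lp (fun _ : ℕ => ℝ) p)‖ ≤ K * ‖x‖) :
    -- conclusion: `Ω` is bounded
    ∃ C : ℝ, ∀ x : lp (fun _ : ℕ => ℝ) p, ∃ h : Memℓp (Ω x) p,
      ‖(⟨Ω x, h⟩ : lp (fun _ : ℕ => ℝ) p)‖ ≤ C * ‖x‖ := by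
  obtain ⟨ℓ, K, hℓ⟩ := htriv
  have hp : 1 ≤ p.toReal := by
    simpa using ENNReal.toReal_mono hptop (Fact.out : 1 ≤ p)
  have hflip : ∀ S x n, Ω (flipSigns S x) n = signOn S n * Ω x n := fun S x =>
    hexact _ (signOn_eq_one_or_eq_neg_one S) x _ fun _ => rfl
  have hdiag : ∀ n, ‖diagEntry ℓ n‖ ≤ K := fun n => norm_diagEntry_le hℓ (hbasis n)
  refine ⟨K + K, fun x => ?_⟩
  have hsum := (lpNormLE_sub_diagEntry_mul hp hflip hℓ x).add
    (lpNormLE_mul_of_forall_norm_le (zero_lt_one.trans_le hp) ((norm_nonneg _).trans (hdiag 0))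
      hdiag x)
  rwa [sub_add_cancel, ← add_mul] at hsum

/-- for `1 < p < ∞`, an exact centralizer `Ω` on real `ℓ_p` vanishing on
the unit vector basis which is trivial on all of `ℓ_p` must be bounded. -/
theorem stmt11 (p : ℝ≥0∞) [Fact (1 ≤ p)] (hp1 : 1 < p) (hptop : p ≠ ⊤)
    (Ω : lp (fun _ : ℕ => ℝ) p → (ℕ → ℝ))
    -- `Ω` is homogeneous
    (hhom : ∀ (c : ℝ) (x : lp (fun _ : ℕ => ℝ) p), Ω (c • x) = c • Ω x)
    -- `Ω` is a centralizer: `‖Ω(a·x) − a·Ω(x)‖_p ≤ C‖a‖_∞‖x‖_p` for `a ∈ ℓ_∞`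
    (hcent : ∃ C : ℝ, ∀ (a : lp (fun _ : ℕ => ℝ) ⊤) (x y : lp (fun _ : ℕ => ℝ) p),
      (∀ n, y n = a n * x n) →
      ∃ h : Memℓp (fun n => Ω y n - a n * Ω x n) p,
        ‖(⟨fun n => Ω y n - a n * Ω x n, h⟩ : lp (fun _ : ℕ => ℝ) p)‖ ≤ C * ‖a‖ * ‖x‖)
    -- `Ω` is exact: `Ω(u·x) = u·Ω(x)` for every unit `u`
    (hexact : ∀ u : ℕ → ℝ, (∀ n, u n = 1 ∨ u n = -1) →
      ∀ x y : lp (fun _ : ℕ => ℝ) p, (∀ n, y n = u n * x n) →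
        ∀ n, Ω y n = u n * Ω x n)
    -- `Ω` vanishes on the unit vector basis
    (hbasis : ∀ n : ℕ, Ω (lp.single p n 1) = 0)
    -- `Ω` is trivial on all of `ℓ_p`
    (htriv : ∃ (ℓ : lp (fun _ : ℕ => ℝ) p →ₗ[ℝ] (ℕ → ℝ)) (K : ℝ),
      ∀ x : lp (fun _ : ℕ => ℝ) p, ∃ h : Memℓp (Ω x - ℓ x) p,
        ‖(⟨Ω x - ℓ x, h⟩ : lp (fun _ : ℕ => ℝ) p)‖ ≤ K * ‖x‖) :
    -- conclusion: `Ω` is bounded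
    ∃ C : ℝ, ∀ x : lp (fun _ : ℕ => ℝ) p, ∃ h : Memℓp (Ω x) p,
      ‖(⟨Ω x, h⟩ : lp (fun _ : ℕ => ℝ) p)‖ ≤ C * ‖x‖ :=
  stmt11_general p hptop Ω hexact hbasis htriv
end

section
/- Let 1 < p < ∞ and let Ω and Ψ be exact centralizers on real ℓ_p with Ω(e_n) = Ψ(e_n) = 0 for all n, where (e_n) is the unit vector basis. If Ω and Ψ are equivalent, i.e., there exist a linear map L : ℓ_p → ℝ^ℕ and a homogeneous map B : ℓ_p → ℝ^ℕ with B(x) ∈ ℓ_p and ‖B(x)‖_p ≤ K‖x‖_p for all x, such that Ω − Ψ = B + L, then Ω and Ψ are boundedly equivalent: there is a constant C such that Ω(x) − Ψ(x) ∈ ℓ_p and ‖Ω(x) − Ψ(x)‖_p ≤ C‖x‖_p for all x ∈ ℓ_p. -/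
/-!
Put `D = Ω - Ψ`, an exact centralizer with `D eₙ = 0` and `D = B + L`. Since `L eₙ = -B eₙ`,
the diagonal entries `(L eₙ)ₙ` are bounded by `K`. For `x` supported on a finite set `S`,
exactness gives `D x = ε · D (ε x) = ε · B (ε x) + ε · L (ε x)` for each of the `2 ^ |S|` sign
patterns `ε` on `S`, and averaging over them cancels every off-diagonal entry of `L`: `D x` is an
average of vectors `ε · B (ε x)` of norm at most `K ‖x‖` plus the diagonal part `(xₙ (L eₙ)ₙ)ₙ`,
so `‖D x‖ ≤ 2 K ‖x‖`. For general `x`, the centralizer estimate for multiplication by the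
indicator of a finite set `S` compares `1_S · D x` with `D (1_S x)` up to `C ‖x‖`, uniformly in `S`.
-/

open scoped ENNReal lp
open Finset

variable {α : Type*} {p : ℝ≥0∞}

def LpNormLe (p : ℝ≥0∞) (f : α → ℝ) (c : ℝ) : Prop :=
  ∃ h : Memℓp f p, ‖(⟨f, h⟩ : ℓ^p(α, ℝ))‖ ≤ c

theorem lpNormLe_coe (x : ℓ^p(α, ℝ)) : LpNormLe p x ‖x‖ :=
  ⟨lp.memℓp x, le_rfl⟩

namespace LpNormLe

variable {f g : α → ℝ} {c d : ℝ}

theorem mono (hf : LpNormLe p f c) (hcd : c ≤ d) : LpNormLe p f d :=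
  let ⟨h, hc⟩ := hf; ⟨h, hc.trans hcd⟩

theorem of_abs_le (hp : p ≠ 0) (hg : LpNormLe p g c) (hfg : ∀ i, |f i| ≤ |g i|) :
    LpNormLe p f c :=
  let ⟨hg, hgc⟩ := hg
  ⟨hg.mono' hfg, (lp.norm_mono (x := ⟨f, hg.mono' hfg⟩) (y := ⟨g, hg⟩) hp hfg).trans hgc⟩

theorem abs_apply_le (hp : p ≠ 0) (hf : LpNormLe p f c) (i : α) : |f i| ≤ c :=
  let ⟨h, hc⟩ := hf
  (lp.norm_apply_le_norm hp ⟨f, h⟩ i).trans hc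

theorem of_forall_sum_le (hp : 0 < p.toReal) (hc : 0 ≤ c)
    (h : ∀ s : Finset α, ∑ i ∈ s, ‖f i‖ ^ p.toReal ≤ c ^ p.toReal) : LpNormLe p f c := by
  have hf : Memℓp f p := memℓp_gen' h
  exact ⟨hf, lp.norm_le_of_forall_sum_le hp hc h⟩

theorem of_forall_finset (hp : 0 < p.toReal) (hc : 0 ≤ c)
    (h : ∀ s : Finset α, LpNormLe p ((s : Set α).indicator f) c) : LpNormLe p f c := by
  refine of_forall_sum_le hp hc fun s => ?_
  obtain ⟨hs, hsc⟩ := h s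
  set fs : ℓ^p(α, ℝ) := ⟨_, hs⟩
  calc ∑ i ∈ s, ‖f i‖ ^ p.toReal = ∑ i ∈ s, ‖fs i‖ ^ p.toReal :=
        sum_congr rfl fun i hi => by simp [fs, Set.indicator_of_mem (mem_coe.2 hi)]
    _ ≤ ‖fs‖ ^ p.toReal := lp.sum_rpow_le_norm_rpow hp fs s
    _ ≤ c ^ p.toReal := by gcongr; exact lp.norm_nonneg' fs

variable [Fact (1 ≤ p)]

theorem add (hf : LpNormLe p f c) (hg : LpNormLe p g d) : LpNormLe p (f + g) (c + d) :=
  let ⟨hf, hfc⟩ := hf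
  let ⟨hg, hgd⟩ := hg
  ⟨hf.add hg, (norm_add_le (⟨f, hf⟩ : ℓ^p(α, ℝ)) ⟨g, hg⟩).trans (add_le_add hfc hgd)⟩

theorem sub (hf : LpNormLe p f c) (hg : LpNormLe p g d) : LpNormLe p (f - g) (c + d) :=
  let ⟨hf, hfc⟩ := hf
  let ⟨hg, hgd⟩ := hg
  ⟨hf.sub hg, (norm_sub_le (⟨f, hf⟩ : ℓ^p(α, ℝ)) ⟨g, hg⟩).trans (add_le_add hfc hgd)⟩

theorem const_smul (hf : LpNormLe p f c) (a : ℝ) : LpNormLe p (a • f) (|a| * c) :=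
  let ⟨hf, hfc⟩ := hf
  ⟨hf.const_smul a, by
    rw [show (⟨a • f, hf.const_smul a⟩ : ℓ^p(α, ℝ)) = a • ⟨f, hf⟩ from rfl, norm_smul,
      Real.norm_eq_abs]
    exact mul_le_mul_of_nonneg_left hfc (abs_nonneg a)⟩

theorem sum {ι : Type*} (s : Finset ι) {f : ι → α → ℝ} {c : ι → ℝ}
    (h : ∀ j ∈ s, LpNormLe p (f j) (c j)) : LpNormLe p (∑ j ∈ s, f j) (∑ j ∈ s, c j) := by
  classical
  induction s using Finset.induction_on with
  | empty => exact ⟨zero_memℓp, lp.norm_zero.le⟩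
  | insert j s hj ih =>
    rw [sum_insert hj, sum_insert hj]
    exact (h j (mem_insert_self j s)).add (ih fun k hk => h k (mem_insert_of_mem hk))

end LpNormLe

def lp.mulOfAbsLeOne (u : α → ℝ) (hu : ∀ i, |u i| ≤ 1) (x : ℓ^p(α, ℝ)) : ℓ^p(α, ℝ) :=
  ⟨fun i => u i * x i, (lp.memℓp x).mono' fun i => by
    simpa [abs_mul] using mul_le_of_le_one_left (abs_nonneg (x i)) (hu i)⟩

@[simp]
theorem lp.mulOfAbsLeOne_apply (u : α → ℝ) (hu : ∀ i, |u i| ≤ 1) (x : ℓ^p(α, ℝ)) (i : α) :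
    lp.mulOfAbsLeOne u hu x i = u i * x i :=
  rfl

theorem lp.norm_mulOfAbsLeOne_le (hp : p ≠ 0) (u : α → ℝ) (hu : ∀ i, |u i| ≤ 1)
    (x : ℓ^p(α, ℝ)) : ‖lp.mulOfAbsLeOne u hu x‖ ≤ ‖x‖ :=
  lp.norm_mono hp fun i => by
    simpa [abs_mul] using mul_le_of_le_one_left (abs_nonneg (x i)) (hu i)

def CentralizerWith (C : ℝ) (D : ℓ^p(α, ℝ) → α → ℝ) : Prop :=
  ∀ (a : ℓ^∞(α, ℝ)) (x y : ℓ^p(α, ℝ)), (∀ n, y n = a n * x n) →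
    LpNormLe p (fun n => D y n - a n * D x n) (C * ‖a‖ * ‖x‖)

section

variable [Fact (1 ≤ p)]

theorem CentralizerWith.sub {Ω Ψ : ℓ^p(α, ℝ) → α → ℝ} {CΩ CΨ : ℝ} (hΩ : CentralizerWith CΩ Ω)
    (hΨ : CentralizerWith CΨ Ψ) : CentralizerWith (CΩ + CΨ) (Ω - Ψ) := fun a x y hxy => by
  have h := (hΩ a x y hxy).sub (hΨ a x y hxy)
  rw [← add_mul, ← add_mul] at h
  convert h using 1
  funext n
  simp only [Pi.sub_apply]
  ring

theorem CentralizerWith.lpNormLe_of_forall_finite_support {D : ℓ^p(α, ℝ) → α → ℝ} {C M : ℝ}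
    (hp : p ≠ ⊤) (hD : CentralizerWith C D) (hM : 0 ≤ M)
    (hfin : ∀ (S : Finset α) (x : ℓ^p(α, ℝ)), (∀ i ∉ S, x i = 0) → LpNormLe p (D x) (M * ‖x‖))
    (x : ℓ^p(α, ℝ)) : LpNormLe p (D x) ((M + |C|) * ‖x‖) := by
  have hp0 : p ≠ 0 := (zero_lt_one.trans_le Fact.out).ne'
  refine LpNormLe.of_forall_finset (ENNReal.toReal_pos hp0 hp) (by positivity) fun S => ?_
  set u : α → ℝ := (S : Set α).indicator 1
  have hu : ∀ i, |u i| ≤ 1 := fun i => by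
    by_cases hi : i ∈ S <;> simp [u, hi]
  let a : ℓ^∞(α, ℝ) := ⟨u, memℓp_infty ⟨1, by rintro _ ⟨i, rfl⟩; exact hu i⟩⟩
  have ha : ‖a‖ ≤ 1 := lp.norm_le_of_forall_le zero_le_one hu
  let y := lp.mulOfAbsLeOne u hu x
  have hy : ‖y‖ ≤ ‖x‖ := lp.norm_mulOfAbsLeOne_le hp0 u hu x
  have h := (hfin S y fun i hi => by simp [y, u, hi]).sub (hD a x y fun _ => rfl)
  have hDx : (S : Set α).indicator (D x) = D y - fun n => D y n - a n * D x n := by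
    funext n
    by_cases hn : n ∈ S <;> simp [a, u, hn]
  have hCa : C * ‖a‖ ≤ |C| :=
    (mul_le_mul_of_nonneg_right (le_abs_self C) (norm_nonneg a)).trans
      (mul_le_of_le_one_right (abs_nonneg C) ha)
  rw [hDx]
  refine h.mono ?_
  nlinarith [mul_le_mul_of_nonneg_left hy hM, mul_le_mul_of_nonneg_right hCa (norm_nonneg x)]

end

section Signs

variable [DecidableEq α]

def signs (T : Finset α) (i : α) : ℝ := if i ∈ T then -1 else 1

theorem signs_eq_one_or_eq_neg_one (T : Finset α) (i : α) : signs T i = 1 ∨ signs T i = -1 := by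
  unfold signs; split_ifs <;> simp

theorem abs_signs (T : Finset α) (i : α) : |signs T i| = 1 := by
  unfold signs; split_ifs <;> simp

theorem signs_mul_self (T : Finset α) (i : α) : signs T i * signs T i = 1 := by
  unfold signs; split_ifs <;> simp

theorem sum_powerset_signs_mul_signs {S : Finset α} {j : α} (hj : j ∈ S) (i : α) :
    ∑ T ∈ S.powerset, signs T i * signs T j = if j = i then 2 ^ #S else 0 := by
  split_ifs with hji
  · simp [hji, signs_mul_self]
  -- pair each `T ∌ j` with `insert j T`: the two terms cancel
  rw [← insert_erase hj, sum_powerset_insert (notMem_erase j S), ← sum_add_distrib]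
  refine sum_eq_zero fun T hT => ?_
  have hjT : j ∉ T := fun h => notMem_erase j S (mem_powerset.1 hT h)
  simp [signs, hjT, Ne.symm hji]

theorem sum_powerset_signs_mul_sum (S : Finset α) (i : α) (c : α → ℝ) :
    ∑ T ∈ S.powerset, signs T i * ∑ j ∈ S, signs T j * c j =
      2 ^ #S * if i ∈ S then c i else 0 := by
  simp_rw [mul_sum, ← mul_assoc]
  rw [sum_comm]
  simp_rw [← sum_mul]
  rw [sum_congr rfl fun j hj => by rw [sum_powerset_signs_mul_signs hj i]]
  simp [ite_mul, sum_ite_eq']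

end Signs

def IsExact (D : ℓ^p(α, ℝ) → α → ℝ) : Prop :=
  ∀ u : α → ℝ, (∀ n, u n = 1 ∨ u n = -1) →
    ∀ x y : ℓ^p(α, ℝ), (∀ n, y n = u n * x n) → ∀ n, D y n = u n * D x n

theorem IsExact.sub {Ω Ψ : ℓ^p(α, ℝ) → α → ℝ} (hΩ : IsExact Ω) (hΨ : IsExact Ψ) :
    IsExact (Ω - Ψ) := fun u hu x y hxy n => by
  simp only [Pi.sub_apply, hΩ u hu x y hxy n, hΨ u hu x y hxy n, mul_sub]

section Averaging

variable [DecidableEq α]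

def signFlip (T : Finset α) (x : ℓ^p(α, ℝ)) : ℓ^p(α, ℝ) :=
  lp.mulOfAbsLeOne (signs T) (fun i => (abs_signs T i).le) x

theorem lp.eq_sum_smul_single {x : ℓ^p(α, ℝ)} {S : Finset α} (hx : ∀ i ∉ S, x i = 0) :
    x = ∑ i ∈ S, x i • lp.single p i 1 := by
  refine lp.ext (funext fun j => ?_)
  rw [lp.coeFn_sum, Finset.sum_apply]
  by_cases hj : j ∈ S <;> simp [Pi.single_apply, hj, hx]

theorem LinearMap.lp_apply_eq_sum (L : ℓ^p(α, ℝ) →ₗ[ℝ] (α → ℝ)) {x : ℓ^p(α, ℝ)} {S : Finset α}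
    (hx : ∀ i ∉ S, x i = 0) (j : α) : L x j = ∑ i ∈ S, x i * L (lp.single p i 1) j := by
  conv_lhs => rw [lp.eq_sum_smul_single hx]
  simp

theorem LinearMap.sum_powerset_signs_mul_apply_signFlip (L : ℓ^p(α, ℝ) →ₗ[ℝ] (α → ℝ))
    {x : ℓ^p(α, ℝ)} {S : Finset α} (hx : ∀ i ∉ S, x i = 0) (j : α) :
    ∑ T ∈ S.powerset, signs T j * L (signFlip T x) j = 2 ^ #S * (x j * L (lp.single p j 1) j) := by
  have hflip (T : Finset α) : ∀ i ∉ S, signFlip T x i = 0 := fun i hi => by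
    simp [signFlip, hx i hi]
  simp_rw [L.lp_apply_eq_sum (hflip _), signFlip, lp.mulOfAbsLeOne_apply, mul_assoc]
  rw [sum_powerset_signs_mul_sum]
  by_cases hj : j ∈ S <;> simp [hj, hx]

theorem IsExact.eq_average {D B : ℓ^p(α, ℝ) → α → ℝ} (hD : IsExact D)
    (L : ℓ^p(α, ℝ) →ₗ[ℝ] (α → ℝ)) (hDBL : ∀ x, D x = B x + L x) {x : ℓ^p(α, ℝ)}
    {S : Finset α} (hx : ∀ i ∉ S, x i = 0) :
    D x = (2 ^ #S : ℝ)⁻¹ • ∑ T ∈ S.powerset, signs T * B (signFlip T x) +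
      fun j => x j * L (lp.single p j 1) j := by
  funext j
  have hT (T : Finset α) :
      D x j = signs T j * B (signFlip T x) j + signs T j * L (signFlip T x) j := by
    rw [← mul_add, ← Pi.add_apply (B _), ← hDBL,
      hD (signs T) (signs_eq_one_or_eq_neg_one T) x (signFlip T x) (fun _ => rfl) j, ← mul_assoc,
      signs_mul_self, one_mul]
  have hsum : (2 ^ #S : ℝ) * D x j = ∑ T ∈ S.powerset, signs T j * B (signFlip T x) j +
      2 ^ #S * (x j * L (lp.single p j 1) j) := by
    rw [← L.sum_powerset_signs_mul_apply_signFlip hx, ← sum_add_distrib,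
      ← sum_congr rfl fun T _ => hT T]
    simp
  simp only [Pi.add_apply, Pi.smul_apply, Finset.sum_apply, Pi.mul_apply, smul_eq_mul]
  field_simp
  linarith

variable [Fact (1 ≤ p)]

theorem LinearMap.abs_apply_single_self_le {D B : ℓ^p(α, ℝ) → α → ℝ} {K : ℝ}
    (L : ℓ^p(α, ℝ) →ₗ[ℝ] (α → ℝ)) (hbasis : ∀ i, D (lp.single p i 1) = 0)
    (hDBL : ∀ x, D x = B x + L x) (hB : ∀ x, LpNormLe p (B x) (K * ‖x‖)) (i : α) :
    |L (lp.single p i 1) i| ≤ K := by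
  have hp : 0 < p := zero_lt_one.trans_le Fact.out
  have hLB : L (lp.single p i 1) i = -B (lp.single p i 1) i := by
    have := congrFun (hDBL (lp.single p i 1)) i
    rw [hbasis] at this
    simp only [Pi.zero_apply, Pi.add_apply] at this
    linarith
  rw [hLB, abs_neg]
  simpa [lp.norm_single hp] using (hB (lp.single p i 1)).abs_apply_le hp.ne' i

theorem IsExact.lpNormLe_of_support_subset {D B : ℓ^p(α, ℝ) → α → ℝ} {K : ℝ} (hD : IsExact D)
    (L : ℓ^p(α, ℝ) →ₗ[ℝ] (α → ℝ)) (hDBL : ∀ x, D x = B x + L x)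
    (hB : ∀ x, LpNormLe p (B x) (K * ‖x‖)) (hK : 0 ≤ K)
    (hdiag : ∀ i, |L (lp.single p i 1) i| ≤ K) {x : ℓ^p(α, ℝ)} {S : Finset α}
    (hx : ∀ i ∉ S, x i = 0) : LpNormLe p (D x) (2 * K * ‖x‖) := by
  have hp : p ≠ 0 := (zero_lt_one.trans_le Fact.out).ne'
  have hflip (T : Finset α) : LpNormLe p (signs T * B (signFlip T x)) (K * ‖x‖) :=
    ((hB (signFlip T x)).of_abs_le hp fun i => by simp [abs_mul, abs_signs]).mono
      (mul_le_mul_of_nonneg_left (lp.norm_mulOfAbsLeOne_le hp (signs T) _ x) hK)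
  have hdiag' : LpNormLe p (fun j => x j * L (lp.single p j 1) j) (K * ‖x‖) := by
    have := (lpNormLe_coe (K • x)).of_abs_le hp (f := fun j => x j * L (lp.single p j 1) j)
      fun j => by
        simp only [lp.coeFn_smul, Pi.smul_apply, smul_eq_mul, abs_mul, abs_of_nonneg hK]
        rw [mul_comm]
        exact mul_le_mul_of_nonneg_right (hdiag j) (abs_nonneg _)
    rwa [norm_smul, Real.norm_eq_abs, abs_of_nonneg hK] at this
  rw [hD.eq_average L hDBL hx]
  refine (((LpNormLe.sum _ fun T _ => hflip T).const_smul _).add hdiag').mono (le_of_eq ?_)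
  simp only [sum_const, card_powerset, nsmul_eq_mul, Nat.cast_pow, Nat.cast_ofNat, abs_inv,
    abs_pow, abs_two]
  field_simp
  ring

end Averaging

theorem stmt12_general (p : ℝ≥0∞) [Fact (1 ≤ p)] (hptop : p ≠ ⊤)
    (Ω Ψ : lp (fun _ : ℕ => ℝ) p → (ℕ → ℝ))
    -- `Ω` and `Ψ` are centralizers
    (hcentΩ : ∃ C : ℝ, ∀ (a : lp (fun _ : ℕ => ℝ) ⊤) (x y : lp (fun _ : ℕ => ℝ) p),
      (∀ n, y n = a n * x n) →
      ∃ h : Memℓp (fun n => Ω y n - a n * Ω x n) p,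
        ‖(⟨fun n => Ω y n - a n * Ω x n, h⟩ : lp (fun _ : ℕ => ℝ) p)‖ ≤ C * ‖a‖ * ‖x‖)
    (hcentΨ : ∃ C : ℝ, ∀ (a : lp (fun _ : ℕ => ℝ) ⊤) (x y : lp (fun _ : ℕ => ℝ) p),
      (∀ n, y n = a n * x n) →
      ∃ h : Memℓp (fun n => Ψ y n - a n * Ψ x n) p,
        ‖(⟨fun n => Ψ y n - a n * Ψ x n, h⟩ : lp (fun _ : ℕ => ℝ) p)‖ ≤ C * ‖a‖ * ‖x‖)
    -- `Ω` and `Ψ` are exact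
    (hexactΩ : ∀ u : ℕ → ℝ, (∀ n, u n = 1 ∨ u n = -1) →
      ∀ x y : lp (fun _ : ℕ => ℝ) p, (∀ n, y n = u n * x n) →
        ∀ n, Ω y n = u n * Ω x n)
    (hexactΨ : ∀ u : ℕ → ℝ, (∀ n, u n = 1 ∨ u n = -1) →
      ∀ x y : lp (fun _ : ℕ => ℝ) p, (∀ n, y n = u n * x n) →
        ∀ n, Ψ y n = u n * Ψ x n)
    -- both vanish on the unit vector basis
    (hbasisΩ : ∀ n : ℕ, Ω (lp.single p n 1) = 0)
    (hbasisΨ : ∀ n : ℕ, Ψ (lp.single p n 1) = 0)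
    -- `Ω` and `Ψ` are equivalent: `Ω − Ψ = B + L`, `B` homogeneous bounded, `L` linear
    (hequiv : ∃ (L : lp (fun _ : ℕ => ℝ) p →ₗ[ℝ] (ℕ → ℝ))
        (B : lp (fun _ : ℕ => ℝ) p → (ℕ → ℝ)) (K : ℝ),
      (∀ (c : ℝ) (x : lp (fun _ : ℕ => ℝ) p), B (c • x) = c • B x) ∧
      (∀ x : lp (fun _ : ℕ => ℝ) p, ∃ h : Memℓp (B x) p,
        ‖(⟨B x, h⟩ : lp (fun _ : ℕ => ℝ) p)‖ ≤ K * ‖x‖) ∧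
      (∀ x : lp (fun _ : ℕ => ℝ) p, Ω x - Ψ x = B x + L x)) :
    -- conclusion: `Ω` and `Ψ` are boundedly equivalent
    ∃ C : ℝ, ∀ x : lp (fun _ : ℕ => ℝ) p, ∃ h : Memℓp (Ω x - Ψ x) p,
      ‖(⟨Ω x - Ψ x, h⟩ : lp (fun _ : ℕ => ℝ) p)‖ ≤ C * ‖x‖ := by
  obtain ⟨CΩ, hCΩ⟩ := hcentΩ
  obtain ⟨CΨ, hCΨ⟩ := hcentΨ
  obtain ⟨L, B, K, -, hB, hDBL⟩ := hequiv
  have hD : IsExact (Ω - Ψ) := IsExact.sub hexactΩ hexactΨ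
  have hbasis (n : ℕ) : (Ω - Ψ) (lp.single p n 1) = 0 := by simp [hbasisΩ, hbasisΨ]
  have hdiag : ∀ n, |L (lp.single p n 1) n| ≤ K := L.abs_apply_single_self_le hbasis hDBL hB
  have hK : 0 ≤ K := (abs_nonneg _).trans (hdiag 0)
  exact ⟨2 * K + |CΩ + CΨ|, (CentralizerWith.sub hCΩ hCΨ).lpNormLe_of_forall_finite_support
    hptop (by positivity) fun S x hx => hD.lpNormLe_of_support_subset L hDBL hB hK hdiag hx⟩

/-- for `1 < p < ∞`, if two exact centralizers `Ω`, `Ψ` on real `ℓ_p`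
vanishing on the unit vector basis are equivalent (`Ω − Ψ = B + L` with `B` homogeneous
bounded and `L` linear), then they are boundedly equivalent. -/
theorem stmt12 (p : ℝ≥0∞) [Fact (1 ≤ p)] (hp1 : 1 < p) (hptop : p ≠ ⊤)
    (Ω Ψ : lp (fun _ : ℕ => ℝ) p → (ℕ → ℝ))
    -- `Ω` and `Ψ` are homogeneous
    (hhomΩ : ∀ (c : ℝ) (x : lp (fun _ : ℕ => ℝ) p), Ω (c • x) = c • Ω x)
    (hhomΨ : ∀ (c : ℝ) (x : lp (fun _ : ℕ => ℝ) p), Ψ (c • x) = c • Ψ x)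
    -- `Ω` and `Ψ` are centralizers
    (hcentΩ : ∃ C : ℝ, ∀ (a : lp (fun _ : ℕ => ℝ) ⊤) (x y : lp (fun _ : ℕ => ℝ) p),
      (∀ n, y n = a n * x n) →
      ∃ h : Memℓp (fun n => Ω y n - a n * Ω x n) p,
        ‖(⟨fun n => Ω y n - a n * Ω x n, h⟩ : lp (fun _ : ℕ => ℝ) p)‖ ≤ C * ‖a‖ * ‖x‖)
    (hcentΨ : ∃ C : ℝ, ∀ (a : lp (fun _ : ℕ => ℝ) ⊤) (x y : lp (fun _ : ℕ => ℝ) p),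
      (∀ n, y n = a n * x n) →
      ∃ h : Memℓp (fun n => Ψ y n - a n * Ψ x n) p,
        ‖(⟨fun n => Ψ y n - a n * Ψ x n, h⟩ : lp (fun _ : ℕ => ℝ) p)‖ ≤ C * ‖a‖ * ‖x‖)
    -- `Ω` and `Ψ` are exact
    (hexactΩ : ∀ u : ℕ → ℝ, (∀ n, u n = 1 ∨ u n = -1) →
      ∀ x y : lp (fun _ : ℕ => ℝ) p, (∀ n, y n = u n * x n) →
        ∀ n, Ω y n = u n * Ω x n)
    (hexactΨ : ∀ u : ℕ → ℝ, (∀ n, u n = 1 ∨ u n = -1) →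
      ∀ x y : lp (fun _ : ℕ => ℝ) p, (∀ n, y n = u n * x n) →
        ∀ n, Ψ y n = u n * Ψ x n)
    -- both vanish on the unit vector basis
    (hbasisΩ : ∀ n : ℕ, Ω (lp.single p n 1) = 0)
    (hbasisΨ : ∀ n : ℕ, Ψ (lp.single p n 1) = 0)
    -- `Ω` and `Ψ` are equivalent: `Ω − Ψ = B + L`, `B` homogeneous bounded, `L` linear
    (hequiv : ∃ (L : lp (fun _ : ℕ => ℝ) p →ₗ[ℝ] (ℕ → ℝ))
        (B : lp (fun _ : ℕ => ℝ) p → (ℕ → ℝ)) (K : ℝ),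
      (∀ (c : ℝ) (x : lp (fun _ : ℕ => ℝ) p), B (c • x) = c • B x) ∧
      (∀ x : lp (fun _ : ℕ => ℝ) p, ∃ h : Memℓp (B x) p,
        ‖(⟨B x, h⟩ : lp (fun _ : ℕ => ℝ) p)‖ ≤ K * ‖x‖) ∧
      (∀ x : lp (fun _ : ℕ => ℝ) p, Ω x - Ψ x = B x + L x)) :
    -- conclusion: `Ω` and `Ψ` are boundedly equivalent
    ∃ C : ℝ, ∀ x : lp (fun _ : ℕ => ℝ) p, ∃ h : Memℓp (Ω x - Ψ x) p,
      ‖(⟨Ω x - Ψ x, h⟩ : lp (fun _ : ℕ => ℝ) p)‖ ≤ C * ‖x‖ :=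
  stmt12_general p hptop Ω Ψ hcentΩ hcentΨ hexactΩ hexactΨ hbasisΩ hbasisΨ hequiv
end

section
/- Let 1 ≤ p < ∞, let Y be a Banach space, and let F : ℓ_p → Y be a quasi-linear map. Then F is singular if and only if F is disjointly singular; that is, F is trivial on no infinite-dimensional closed subspace of ℓ_p if and only if F is trivial on no closed linear span of a sequence of nonzero pairwise disjointly supported vectors of ℓ_p. -/
/-!
Suppose `F` is trivial on an infinite-dimensional subspace `M`, via a linear map `L`. A gliding
hump (this is where `p < ∞` enters) gives unit vectors `xₙ ∈ M` and disjointly supported `yₙ`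
with `‖xₙ - yₙ‖` as small as we like. Disjointness bounds the coefficients of `∑ cₙ yₙ` by its
norm, so `∑ cₙ yₙ ↦ L (∑ cₙ xₙ) - ∑ cₙ F (xₙ - yₙ)` stays within bounded distance of `F`: the
quasi-linearity defect of `∑ cₙ (xₙ - yₙ)` is at most `K ∑ (n + 1) ‖cₙ (xₙ - yₙ)‖`. Completeness
of `Y` carries triviality from the span to its closure. Conversely, disjoint nonzero vectors are
linearly independent, so their closed span is infinite-dimensional.
-/

open scoped ENNReal Topology
open Filter Finset

section QuasiLinear

variable {Z Y : Type*} [NormedAddCommGroup Z] [NormedAddCommGroup Y]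

def IsQuasiLinearWith (K : ℝ) (F : Z → Y) : Prop :=
  ∀ u v, ‖F (u + v) - F u - F v‖ ≤ K * (‖u‖ + ‖v‖)

namespace IsQuasiLinearWith

variable {K : ℝ} {F : Z → Y}

theorem mono (hF : IsQuasiLinearWith K F) {K' : ℝ} (h : K ≤ K') : IsQuasiLinearWith K' F :=
  fun u v => (hF u v).trans (mul_le_mul_of_nonneg_right h (by positivity))

theorem map_zero (hF : IsQuasiLinearWith K F) : F 0 = 0 := by
  simpa using hF 0 0

theorem norm_map_sum_sub_sum_map_le (hF : IsQuasiLinearWith K F) (hK : 0 ≤ K) (z : ℕ → Z)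
    (n : ℕ) :
    ‖F (∑ i ∈ range n, z i) - ∑ i ∈ range n, F (z i)‖ ≤ K * ∑ i ∈ range n, (i + 1) * ‖z i‖ := by
  induction n generalizing z with
  | zero => simp [hF.map_zero]
  | succ n ih =>
    set R := ∑ i ∈ range n, z (i + 1)
    calc ‖F (∑ i ∈ range (n + 1), z i) - ∑ i ∈ range (n + 1), F (z i)‖
        = ‖(F (R + z 0) - F R - F (z 0)) + (F R - ∑ i ∈ range n, F (z (i + 1)))‖ := by
          rw [sum_range_succ', sum_range_succ']; congr 1; abel
      _ ≤ K * (‖R‖ + ‖z 0‖) + K * ∑ i ∈ range n, (i + 1) * ‖z (i + 1)‖ :=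
          norm_add_le_of_le (hF _ _) (ih _)
      _ ≤ K * (∑ i ∈ range n, ‖z (i + 1)‖ + ‖z 0‖)
            + K * ∑ i ∈ range n, (i + 1) * ‖z (i + 1)‖ := by
          gcongr; exact norm_sum_le _ _
      _ = K * ∑ i ∈ range (n + 1), (i + 1) * ‖z i‖ := by
          rw [sum_range_succ']; push_cast
          simp only [add_mul, one_mul, sum_add_distrib]; ring

end IsQuasiLinearWith

variable [NormedSpace ℝ Z] [NormedSpace ℝ Y]

def IsTrivialOn (F : Z → Y) (W : Submodule ℝ Z) : Prop :=
  ∃ (L : W →ₗ[ℝ] Y) (C : ℝ), ∀ x : W, ‖F x - L x‖ ≤ C * ‖(x : Z)‖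

theorem IsTrivialOn.exists_nonneg {F : Z → Y} {W : Submodule ℝ Z} (h : IsTrivialOn F W) :
    ∃ (L : W →ₗ[ℝ] Y) (C : ℝ), 0 ≤ C ∧ ∀ x : W, ‖F x - L x‖ ≤ C * ‖(x : Z)‖ := by
  obtain ⟨L, C, hC⟩ := h
  exact ⟨L, |C|, abs_nonneg C, fun x => (hC x).trans (by gcongr; exact le_abs_self C)⟩

theorem map_neg_of_homogeneous {F : Z → Y} (hhom : ∀ (c : ℝ) x, F (c • x) = c • F x) (x : Z) :
    F (-x) = -F x := by
  simpa using hhom (-1) x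

/-- As `w → x`, this tends to the value at `x` of the extension of `L` to the closure of `W`. -/
def extensionApprox (F : Z → Y) {W : Submodule ℝ Z} (L : W →ₗ[ℝ] Y) (x : Z) (w : W) : Y :=
  L w - F (w - x)

namespace IsQuasiLinearWith

variable {K : ℝ} {F : Z → Y}

section Extension

variable {W : Submodule ℝ Z} {L : W →ₗ[ℝ] Y} {C : ℝ}

theorem norm_extensionApprox_sub_le (hF : IsQuasiLinearWith K F)
    (hhom : ∀ (c : ℝ) x, F (c • x) = c • F x) (hC0 : 0 ≤ C)
    (hC : ∀ w : W, ‖F w - L w‖ ≤ C * ‖(w : Z)‖) (x : Z) (w w' : W) :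
    ‖extensionApprox F L x w - extensionApprox F L x w'‖
      ≤ (C + K) * (‖(w : Z) - x‖ + ‖(w' : Z) - x‖) := by
  set a := (w : Z) - x
  set b := (w' : Z) - x
  have hab : ((w - w' : W) : Z) = a + -b := by simp [a, b]
  -- `F` is odd, so `F b = -F (-b)` and the difference is a quasi-linearity defect
  have hsplit : extensionApprox F L x w - extensionApprox F L x w'
      = -(F (w - w' : W) - L (w - w')) + (F (a + -b) - F a - F (-b)) := by
    simp only [extensionApprox, map_sub, hab, map_neg_of_homogeneous hhom]; abel
  calc ‖extensionApprox F L x w - extensionApprox F L x w'‖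
      ≤ C * ‖((w - w' : W) : Z)‖ + K * (‖a‖ + ‖-b‖) := by
        rw [hsplit]
        exact norm_add_le_of_le (by rw [norm_neg]; exact hC _) (hF _ _)
    _ ≤ (C + K) * (‖a‖ + ‖b‖) := by
        rw [hab, norm_neg]
        nlinarith [norm_add_le a (-b), norm_neg b]

theorem exists_tendsto_extensionApprox [CompleteSpace Y] (hF : IsQuasiLinearWith K F)
    (hhom : ∀ (c : ℝ) x, F (c • x) = c • F x) (hC0 : 0 ≤ C)
    (hC : ∀ w : W, ‖F w - L w‖ ≤ C * ‖(w : Z)‖) {x : Z} (hx : x ∈ W.topologicalClosure) :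
    ∃ l : Y, ∀ s : ℕ → W, Tendsto (fun k => (s k : Z)) atTop (𝓝 x) →
      Tendsto (fun k => extensionApprox F L x (s k)) atTop (𝓝 l) := by
  have hdist : ∀ s s' : ℕ → W, Tendsto (fun k => (s k : Z)) atTop (𝓝 x) →
      Tendsto (fun k => (s' k : Z)) atTop (𝓝 x) →
      Tendsto (fun k : ℕ × ℕ => dist (extensionApprox F L x (s k.1))
        (extensionApprox F L x (s' k.2))) atTop (𝓝 0) := by
    intro s s' hs hs'
    have h0 := ((tendsto_iff_norm_sub_tendsto_zero.1 hs).comp tendsto_fst).add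
      ((tendsto_iff_norm_sub_tendsto_zero.1 hs').comp tendsto_snd)
    rw [← prod_atTop_atTop_eq]
    refine squeeze_zero (fun _ => dist_nonneg) (fun k => ?_) (by simpa using h0.const_mul (C + K))
    rw [dist_eq_norm]
    exact hF.norm_extensionApprox_sub_le hhom hC0 hC x _ _
  obtain ⟨s₀, hs₀W, hs₀⟩ := mem_closure_iff_seq_limit.1 hx
  set t : ℕ → W := fun k => ⟨s₀ k, hs₀W k⟩
  have hcauchy : CauchySeq fun k => extensionApprox F L x (t k) :=
    cauchySeq_iff_tendsto_dist_atTop_0.2 (hdist t t hs₀ hs₀)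
  obtain ⟨l, hl⟩ := cauchySeq_tendsto_of_complete hcauchy
  refine ⟨l, fun s hs => tendsto_of_tendsto_of_dist hl ?_⟩
  exact (hdist t s hs₀ hs).comp tendsto_atTop_diagonal

theorem norm_extensionApprox_add_sub_le (hF : IsQuasiLinearWith K F) (x x' : Z) (w w' : W) :
    ‖extensionApprox F L x w + extensionApprox F L x' w' - extensionApprox F L (x + x') (w + w')‖
      ≤ K * (‖(w : Z) - x‖ + ‖(w' : Z) - x'‖) := by
  have hsum : ((w + w' : W) : Z) - (x + x') = ((w : Z) - x) + ((w' : Z) - x') := by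
    simp only [Submodule.coe_add]; abel
  convert hF ((w : Z) - x) ((w' : Z) - x') using 2
  simp only [extensionApprox, hsum, map_add]
  abel

theorem extensionApprox_smul (hhom : ∀ (c : ℝ) x, F (c • x) = c • F x) (c : ℝ) (x : Z) (w : W) :
    extensionApprox F L (c • x) (c • w) = c • extensionApprox F L x w := by
  simp only [extensionApprox, map_smul, SetLike.val_smul]
  rw [← smul_sub, hhom, smul_sub]

theorem norm_sub_extensionApprox_le (hF : IsQuasiLinearWith K F) (hC0 : 0 ≤ C)
    (hC : ∀ w : W, ‖F w - L w‖ ≤ C * ‖(w : Z)‖) (x : Z) (w : W) :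
    ‖F x - extensionApprox F L x w‖ ≤ (K + C) * (‖x‖ + ‖(w : Z) - x‖) := by
  set u := (w : Z) - x
  have hxu : x + u = w := by simp [u]
  calc ‖F x - extensionApprox F L x w‖
      = ‖(F w - L w) - (F (x + u) - F x - F u)‖ := by
        rw [hxu]; simp only [extensionApprox, u]; congr 1; abel
    _ ≤ C * ‖(w : Z)‖ + K * (‖x‖ + ‖u‖) := norm_sub_le_of_le (hC _) (hF _ _)
    _ ≤ (K + C) * (‖x‖ + ‖u‖) := by
        rw [← hxu]; nlinarith [norm_add_le x u]

theorem isTrivialOn_topologicalClosure [CompleteSpace Y] (hF : IsQuasiLinearWith K F)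
    (hhom : ∀ (c : ℝ) x, F (c • x) = c • F x) (h : IsTrivialOn F W) :
    IsTrivialOn F W.topologicalClosure := by
  obtain ⟨L, C, hC0, hC⟩ := h.exists_nonneg
  have hseq : ∀ x : W.topologicalClosure,
      ∃ s : ℕ → W, Tendsto (fun k => (s k : Z)) atTop (𝓝 x) := fun x => by
    obtain ⟨s, hsW, hs⟩ := mem_closure_iff_seq_limit.1 x.2
    exact ⟨fun k => ⟨s k, hsW k⟩, hs⟩
  choose s hs using hseq
  have hsx : ∀ x, Tendsto (fun k => ‖(s x k : Z) - x‖) atTop (𝓝 0) :=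
    fun x => tendsto_iff_norm_sub_tendsto_zero.1 (hs x)
  choose l hl using fun x : W.topologicalClosure =>
    hF.exists_tendsto_extensionApprox hhom hC0 hC x.2
  have hadd : ∀ x x', l (x + x') = l x + l x' := fun x x' =>
    tendsto_nhds_unique
      (hl (x + x') (fun k => s x k + s x' k) (by simpa using (hs x).add (hs x')))
      (tendsto_of_tendsto_of_dist ((hl x _ (hs x)).add (hl x' _ (hs x')))
        (squeeze_zero (fun _ => dist_nonneg)
          (fun k => (dist_eq_norm _ _).trans_le (hF.norm_extensionApprox_add_sub_le _ _ _ _))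
          (by simpa using ((hsx x).add (hsx x')).const_mul K)))
  have hsmul : ∀ (c : ℝ) x, l (c • x) = c • l x := fun c x =>
    tendsto_nhds_unique
      (hl (c • x) (fun k => c • s x k) (by simpa using (hs x).const_smul c))
      (by simpa [extensionApprox_smul hhom] using (hl x _ (hs x)).const_smul c)
  refine ⟨⟨⟨l, hadd⟩, hsmul⟩, K + C, fun x => ?_⟩
  refine le_of_tendsto_of_tendsto' ((tendsto_const_nhds.sub (hl x _ (hs x))).norm) ?_
    fun k => hF.norm_sub_extensionApprox_le hC0 hC x (s x k)
  simpa using ((tendsto_const_nhds.add (hsx x)).const_mul (K + C))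

end Extension

section Perturbation

variable {M : Submodule ℝ Z} {x y : ℕ → Z} {A : ℝ}

theorem norm_map_sum_sub_le_of_perturbation (hF : IsQuasiLinearWith K F) (hK : 0 ≤ K)
    (hhom : ∀ (c : ℝ) x, F (c • x) = c • F x) {L : M →ₗ[ℝ] Y} {C : ℝ} (hC0 : 0 ≤ C)
    (hC : ∀ v : M, ‖F v - L v‖ ≤ C * ‖(v : Z)‖) (hx : ∀ n, x n ∈ M)
    (hA : ∀ (s : Finset ℕ) (c : ℕ → ℝ), ∀ n ∈ s, |c n| ≤ A * ‖∑ m ∈ s, c m • y m‖)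
    (hsmall : ∀ N, A * ∑ n ∈ range N, (n + 1) * ‖x n - y n‖ ≤ 1) (N : ℕ) (c : ℕ → ℝ) :
    ‖F (∑ n ∈ range N, c n • y n)
        - (L (∑ n ∈ range N, c n • ⟨x n, hx n⟩) - ∑ n ∈ range N, c n • F (x n - y n))‖
      ≤ (3 * K + 2 * C) * ‖∑ n ∈ range N, c n • y n‖ := by
  set w := ∑ n ∈ range N, c n • y n
  set z : ℕ → Z := fun n => c n • (x n - y n)
  set e := ∑ n ∈ range N, z n
  set T : M := ∑ n ∈ range N, c n • ⟨x n, hx n⟩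
  have hT : (T : Z) = w + e := by
    simp [T, w, e, z, smul_sub]
  have hweighted : ∑ n ∈ range N, (n + 1) * ‖z n‖ ≤ ‖w‖ := calc
    _ ≤ ∑ n ∈ range N, (n + 1) * (A * ‖w‖ * ‖x n - y n‖) := by
        gcongr with n hn
        rw [norm_smul, Real.norm_eq_abs]
        gcongr
        exact hA _ _ n hn
    _ = ‖w‖ * (A * ∑ n ∈ range N, (n + 1) * ‖x n - y n‖) := by
        rw [mul_sum, mul_sum]; exact sum_congr rfl fun n _ => by ring
    _ ≤ ‖w‖ := mul_le_of_le_one_right (norm_nonneg _) (hsmall N)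
  have he : ‖e‖ ≤ ‖w‖ := by
    refine (norm_sum_le _ _).trans (le_trans (sum_le_sum fun n _ => ?_) hweighted)
    exact le_mul_of_one_le_left (norm_nonneg _) (by linarith [n.cast_nonneg (α := ℝ)])
  have htel : ‖F e - ∑ n ∈ range N, c n • F (x n - y n)‖ ≤ K * ‖w‖ := by
    have h := hF.norm_map_sum_sub_sum_map_le hK z N
    simp only [z, hhom] at h
    exact h.trans (mul_le_mul_of_nonneg_left hweighted hK)
  calc _ = ‖-(F T - F w - F e) + (F T - L T) - (F e - ∑ n ∈ range N, c n • F (x n - y n))‖ := by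
        congr 1; abel
    _ ≤ K * (‖w‖ + ‖e‖) + C * ‖(T : Z)‖ + K * ‖w‖ :=
        norm_sub_le_of_le (norm_add_le_of_le (by rw [norm_neg, hT]; exact hF w e) (hC T)) htel
    _ ≤ (3 * K + 2 * C) * ‖w‖ := by
        rw [hT]; nlinarith [norm_add_le w e]

theorem isTrivialOn_span_of_perturbation (hF : IsQuasiLinearWith K F) (hK : 0 ≤ K)
    (hhom : ∀ (c : ℝ) x, F (c • x) = c • F x) (hM : IsTrivialOn F M) (hx : ∀ n, x n ∈ M)
    (hA : ∀ (s : Finset ℕ) (c : ℕ → ℝ), ∀ n ∈ s, |c n| ≤ A * ‖∑ m ∈ s, c m • y m‖)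
    (hsmall : ∀ N, A * ∑ n ∈ range N, (n + 1) * ‖x n - y n‖ ≤ 1) :
    IsTrivialOn F (Submodule.span ℝ (Set.range y)) := by
  obtain ⟨L, C, hC0, hC⟩ := hM.exists_nonneg
  have hli : LinearIndependent ℝ y := linearIndependent_iff'.2 fun s c hs n hn =>
    abs_nonpos_iff.1 (by simpa [hs] using hA s c n hn)
  let val : ℕ → Y := fun n => L ⟨x n, hx n⟩ - F (x n - y n)
  refine ⟨Finsupp.linearCombination ℝ val ∘ₗ hli.repr, 3 * K + 2 * C, fun w => ?_⟩
  set c := hli.repr w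
  obtain ⟨N, hN⟩ := c.support.exists_nat_subset_range
  have hw : (w : Z) = ∑ n ∈ range N, c n • y n := by
    conv_lhs => rw [← hli.linearCombination_repr w]
    rw [Finsupp.linearCombination_apply]
    exact Finsupp.sum_of_support_subset c hN _ (by simp)
  have hL : (Finsupp.linearCombination ℝ val ∘ₗ hli.repr) w
      = L (∑ n ∈ range N, c n • ⟨x n, hx n⟩) - ∑ n ∈ range N, c n • F (x n - y n) := by
    rw [LinearMap.comp_apply, Finsupp.linearCombination_apply,
      Finsupp.sum_of_support_subset c hN _ (by simp)]
    simp only [val, smul_sub, sum_sub_distrib, map_sum, map_smul]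
  rw [hL, hw]
  exact hF.norm_map_sum_sub_le_of_perturbation hK hhom hC0 hC hx hA hsmall N c

end Perturbation

end IsQuasiLinearWith

end QuasiLinear

theorem LinearIndependent.not_finiteDimensional_topologicalClosure_span {ι 𝕜 Z : Type*}
    [Infinite ι] [Field 𝕜] [AddCommGroup Z] [Module 𝕜 Z] [TopologicalSpace Z]
    [ContinuousAdd Z] [ContinuousConstSMul 𝕜 Z] {y : ι → Z} (hli : LinearIndependent 𝕜 y) :
    ¬ FiniteDimensional 𝕜 (Submodule.span 𝕜 (Set.range y)).topologicalClosure := by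
  intro
  set W := (Submodule.span 𝕜 (Set.range y)).topologicalClosure
  have hmem : ∀ n, y n ∈ W := fun n =>
    Submodule.le_topologicalClosure _ (Submodule.subset_span (Set.mem_range_self n))
  exact Module.Finite.not_linearIndependent_of_infinite (fun n => (⟨y n, hmem n⟩ : W))
    (.of_comp W.subtype hli)

namespace lp

section Disjoint

variable {ι α : Type*} {E : α → Type*} [∀ i, NormedAddCommGroup (E i)]
  [∀ i, NormedSpace ℝ (E i)] {p : ℝ≥0∞} [Fact (1 ≤ p)] {y : ι → lp E p}

theorem norm_smul_le_norm_sum_of_disjoint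
    (hdisj : ∀ m n, m ≠ n → ∀ k, y m k = 0 ∨ y n k = 0) (s : Finset ι) (c : ι → ℝ) {n : ι}
    (hn : n ∈ s) : ‖c n • y n‖ ≤ ‖∑ m ∈ s, c m • y m‖ := by
  refine lp.norm_mono (zero_lt_one.trans_le Fact.out).ne' fun k => ?_
  by_cases hk : y n k = 0
  · simp [hk]
  have hothers : ∀ m ∈ s, m ≠ n → (c m • y m) k = 0 := fun m _ hmn => by
    simp [(hdisj m n hmn k).resolve_right hk]
  rw [lp.coeFn_sum, Finset.sum_apply, sum_eq_single_of_mem n hn hothers]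

theorem linearIndependent_of_disjoint (hne : ∀ n, y n ≠ 0)
    (hdisj : ∀ m n, m ≠ n → ∀ k, y m k = 0 ∨ y n k = 0) : LinearIndependent ℝ y :=
  linearIndependent_iff'.2 fun s c hs n hn => by
    have h := norm_smul_le_norm_sum_of_disjoint hdisj s c hn
    rw [hs, norm_zero, norm_le_zero_iff, smul_eq_zero] at h
    exact h.resolve_right (hne n)

end Disjoint

section Truncation

variable {E : ℕ → Type*} [∀ i, NormedAddCommGroup (E i)] {p : ℝ≥0∞}

theorem sum_range_single_apply (f : lp E p) (N k : ℕ) :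
    (∑ i ∈ range N, lp.single p i (f i)) k = if k < N then f k else 0 := by
  simp only [lp.coeFn_sum, Finset.sum_apply, lp.single_apply, Finset.sum_pi_single,
    Finset.mem_range]

theorem exists_norm_sub_sum_range_single_le [Fact (1 ≤ p)] (hp : p ≠ ⊤)
    (f : lp E p) (m : ℕ) {ε : ℝ} (hε : 0 < ε) :
    ∃ N, m < N ∧ ‖f - ∑ i ∈ range N, lp.single p i (f i)‖ ≤ ε := by
  have h := (lp.hasSum_single hp f).tendsto_sum_nat
  obtain ⟨N, hN, hNm⟩ := ((h.eventually (Metric.closedBall_mem_nhds f hε)).and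
    (eventually_gt_atTop m)).exists
  exact ⟨N, hNm, by rw [← dist_eq_norm, dist_comm]; exact hN⟩

end Truncation

section GlidingHump

variable {E : ℕ → Type*} [∀ i, NormedAddCommGroup (E i)] [∀ i, NormedSpace ℝ (E i)]
  [∀ i, FiniteDimensional ℝ (E i)] {p : ℝ≥0∞} [Fact (1 ≤ p)] {M : Submodule ℝ (lp E p)}

theorem exists_mem_norm_eq_one_forall_lt_eq_zero (hM : ¬ FiniteDimensional ℝ M) (N : ℕ) :
    ∃ x ∈ M, ‖x‖ = 1 ∧ ∀ k < N, x k = 0 := by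
  let φ : M →ₗ[ℝ] ∀ k : Fin N, E k :=
    LinearMap.pi fun k => (lp.evalₗ E p (k : ℕ)).comp M.subtype
  have hker : LinearMap.ker φ ≠ ⊥ := fun h =>
    hM (FiniteDimensional.of_injective φ (LinearMap.ker_eq_bot.1 h))
  obtain ⟨z, hz, hz0⟩ := (Submodule.ne_bot_iff _).1 hker
  have hz0' : (z : lp E p) ≠ 0 := by simpa using hz0
  refine ⟨‖(z : lp E p)‖⁻¹ • z, M.smul_mem _ z.2, norm_smul_inv_norm hz0', fun k hk => ?_⟩
  have hzk : (z : lp E p) k = 0 := congrFun (LinearMap.mem_ker.1 hz) ⟨k, hk⟩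
  simp [hzk]

theorem exists_disjoint_near_of_not_finiteDimensional (hp : p ≠ ⊤)
    (hM : ¬ FiniteDimensional ℝ M) {ε : ℕ → ℝ} (hε : ∀ n, 0 < ε n) :
    ∃ x y : ℕ → lp E p, (∀ n, x n ∈ M) ∧ (∀ n, ‖x n‖ = 1) ∧ (∀ n, ‖x n - y n‖ ≤ ε n) ∧
      ∀ m n, m ≠ n → ∀ k, y m k = 0 ∨ y n k = 0 := by
  choose v hvM hv1 hv0 using exists_mem_norm_eq_one_forall_lt_eq_zero hM
  choose cut hcut hcutε using fun N n => exists_norm_sub_sum_range_single_le hp (v N) N (hε n)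
  -- `b n ≤ k < b (n + 1)` is the block carrying the `n`-th hump
  let b : ℕ → ℕ := fun n => Nat.rec 0 (fun n bn => cut bn n) n
  have hb : StrictMono b := strictMono_nat_of_lt_succ fun n => hcut (b n) n
  let x : ℕ → lp E p := fun n => v (b n)
  let y : ℕ → lp E p := fun n => ∑ i ∈ range (b (n + 1)), lp.single p i (x n i)
  have hsupp : ∀ n k, y n k ≠ 0 → b n ≤ k ∧ k < b (n + 1) := by
    intro n k hk
    rw [sum_range_single_apply] at hk
    split_ifs at hk with h
    · exact ⟨not_lt.1 fun h' => hk (hv0 _ _ h'), h⟩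
    · exact absurd rfl hk
  refine ⟨x, y, fun n => hvM _, fun n => hv1 _, fun n => hcutε _ _, fun m n hmn k => ?_⟩
  by_contra! h
  obtain ⟨hm₁, hm₂⟩ := hsupp m k h.1
  obtain ⟨hn₁, hn₂⟩ := hsupp n k h.2
  rcases hmn.lt_or_gt with hlt | hlt
  · have := hb.monotone (show m + 1 ≤ n by omega); omega
  · have := hb.monotone (show n + 1 ≤ m by omega); omega

theorem exists_disjoint_perturbation_of_not_finiteDimensional (hp : p ≠ ⊤)
    (hM : ¬ FiniteDimensional ℝ M) :
    ∃ x y : ℕ → lp E p, (∀ n, x n ∈ M) ∧ (∀ n, y n ≠ 0) ∧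
      (∀ m n, m ≠ n → ∀ k, y m k = 0 ∨ y n k = 0) ∧
      (∀ (s : Finset ℕ) (c : ℕ → ℝ), ∀ n ∈ s, |c n| ≤ 2 * ‖∑ m ∈ s, c m • y m‖) ∧
      ∀ N, 2 * ∑ n ∈ range N, (n + 1) * ‖x n - y n‖ ≤ 1 := by
  set ε : ℕ → ℝ := fun n => (1 / 2) ^ n / (4 * (n + 1))
  have hε_le : ∀ n, ε n ≤ 1 / 4 := fun n => by
    rw [div_le_iff₀ (by positivity)]
    nlinarith [pow_le_one₀ (by norm_num : (0 : ℝ) ≤ 1 / 2) (by norm_num) (n := n),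
      n.cast_nonneg (α := ℝ)]
  obtain ⟨x, y, hxM, hx1, hxy, hdisj⟩ :=
    exists_disjoint_near_of_not_finiteDimensional hp hM (ε := ε) fun n => by positivity
  have hy : ∀ n, 1 / 2 ≤ ‖y n‖ := fun n => by
    linarith [norm_sub_norm_le (x n) (y n), hx1 n, hxy n, hε_le n]
  refine ⟨x, y, hxM, fun n h => absurd (hy n) (by simp [h]), hdisj, fun s c n hn => ?_, fun N => ?_⟩
  · have h := norm_smul_le_norm_sum_of_disjoint hdisj s c hn
    rw [norm_smul, Real.norm_eq_abs] at h
    nlinarith [hy n, abs_nonneg (c n)]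
  · calc 2 * ∑ n ∈ range N, (n + 1) * ‖x n - y n‖
        ≤ 2 * ∑ n ∈ range N, (n + 1) * ε n := by gcongr with n; exact hxy n
      _ = (1 / 2) * ∑ n ∈ range N, (1 / 2 : ℝ) ^ n := by
        rw [mul_sum, mul_sum]
        exact sum_congr rfl fun n _ => by simp only [ε]; field_simp; ring
      _ ≤ 1 := by linarith [sum_geometric_two_le N]

end GlidingHump

end lp

/-- for `1 ≤ p < ∞` and a quasi-linear map `F : ℓ_p → Y` into a Banach
space `Y`, `F` is singular (trivial on no infinite-dimensional closed subspace of `ℓ_p`)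
iff `F` is disjointly singular (trivial on no closed linear span of a sequence of nonzero
pairwise disjointly supported vectors). -/
theorem stmt15 (p : ℝ≥0∞) [Fact (1 ≤ p)] (hptop : p ≠ ⊤)
    {Y : Type*} [NormedAddCommGroup Y] [NormedSpace ℝ Y] [CompleteSpace Y]
    (F : lp (fun _ : ℕ => ℝ) p → Y)
    -- `F` is homogeneous
    (hhom : ∀ (c : ℝ) (x : lp (fun _ : ℕ => ℝ) p), F (c • x) = c • F x)
    -- `F` is quasi-linear
    (hql : ∃ M : ℝ, ∀ u v : lp (fun _ : ℕ => ℝ) p,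
      ‖F (u + v) - F u - F v‖ ≤ M * (‖u‖ + ‖v‖)) :
    -- `F` singular ↔ `F` disjointly singular
    (¬ ∃ M : Submodule ℝ (lp (fun _ : ℕ => ℝ) p),
        IsClosed (M : Set (lp (fun _ : ℕ => ℝ) p)) ∧ ¬ FiniteDimensional ℝ M ∧
        ∃ (L : M →ₗ[ℝ] Y) (C : ℝ),
          ∀ x : M, ‖F ↑x - L x‖ ≤ C * ‖(x : lp (fun _ : ℕ => ℝ) p)‖)
    ↔
    (¬ ∃ u : ℕ → lp (fun _ : ℕ => ℝ) p, (∀ n, u n ≠ 0) ∧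
        (∀ m n, m ≠ n → ∀ k, u m k = 0 ∨ u n k = 0) ∧
        ∃ (L : ((Submodule.span ℝ (Set.range u)).topologicalClosure) →ₗ[ℝ] Y) (C : ℝ),
          ∀ x : ((Submodule.span ℝ (Set.range u)).topologicalClosure),
            ‖F ↑x - L x‖ ≤ C * ‖(x : lp (fun _ : ℕ => ℝ) p)‖) := by
  obtain ⟨K, hK⟩ := hql
  have hF : IsQuasiLinearWith |K| F := IsQuasiLinearWith.mono hK (le_abs_self K)
  constructor
  · rintro hsing ⟨u, hne, hdisj, htriv⟩
    exact hsing ⟨_, Submodule.isClosed_topologicalClosure _,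
      (lp.linearIndependent_of_disjoint hne hdisj).not_finiteDimensional_topologicalClosure_span,
      htriv⟩
  · rintro hdsing ⟨M, -, hM, htriv⟩
    obtain ⟨x, y, hxM, hne, hdisj, hcoef, hsmall⟩ :=
      lp.exists_disjoint_perturbation_of_not_finiteDimensional hptop hM
    exact hdsing ⟨y, hne, hdisj, hF.isTrivialOn_topologicalClosure hhom
      (hF.isTrivialOn_span_of_perturbation (abs_nonneg K) hhom htriv hxM hcoef hsmall)⟩
end
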